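/- arXiv:1703.00781 — 5 statements merged into one kernel-verified Lean document; each statement's English description precedes it below -/
import Mathlib

section
/- Let γ ∈ (0,1) and f ∈ 𝓕. Then for every ε > 0 and every x ≠ 0, V f_ε(x) = ∫_ℝ |x−y|^{γ−1} f_ε(y) dy ≤ ‖f‖_∞ · (2^{2−γ}/γ) · |x|^{γ−1}, where ‖f‖_∞ is the supremum norm of f. -/
open MeasureTheory Filter Set

/-- The class `𝓕`: nonnegative, even, smooth functions supported in the open unit ball with
integral one. -/
def memF (f : ℝ → ℝ) : Prop :=
  (∀ x, 0 ≤ f x) ∧ (∀ x, f (-x) = f x) ∧ ContDiff ℝ (⊤ : ℕ∞) f ∧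
    Function.support f ⊆ Metric.ball (0 : ℝ) 1 ∧ (∫ x, f x) = 1

/-- The rescaling `f_ε(x) = ε⁻¹ f(x/ε)`. -/
noncomputable def scaled (f : ℝ → ℝ) (ε : ℝ) (x : ℝ) : ℝ := ε⁻¹ * f (x / ε)

/-- Subadditivity of `rpow` for exponents in `[0,1]`. -/
lemma aux_rpow_subadd {γ : ℝ} (hγ0 : 0 ≤ γ) (hγ1 : γ ≤ 1) {u v : ℝ} (hu : 0 ≤ u) (hv : 0 ≤ v) :
    (u + v) ^ γ ≤ u ^ γ + v ^ γ := by
  have h := NNReal.rpow_add_le_add_rpow u.toNNReal v.toNNReal hγ0 hγ1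
  have h' := NNReal.coe_le_coe.2 h
  push_cast at h'
  rwa [Real.coe_toNNReal u hu, Real.coe_toNNReal v hv] at h'

/-- Concavity consequence: `u^γ + v^γ ≤ 2 ((u+v)/2)^γ`. -/
lemma aux_rpow_concave {γ : ℝ} (hγ0 : 0 ≤ γ) (hγ1 : γ ≤ 1) {u v : ℝ} (hu : 0 ≤ u) (hv : 0 ≤ v) :
    u ^ γ + v ^ γ ≤ 2 * ((u + v) / 2) ^ γ := by
  have h := (Real.concaveOn_rpow hγ0 hγ1).2 (Set.mem_Ici.2 hu) (Set.mem_Ici.2 hv)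
    (by norm_num : (0:ℝ) ≤ 1/2) (by norm_num : (0:ℝ) ≤ 1/2) (by norm_num)
  simp only [smul_eq_mul] at h
  have : (1/2 : ℝ) * u + 1/2 * v = (u + v) / 2 := by ring
  rw [this] at h
  linarith

/-- Interval integrability of `|t|^(γ-1)`. -/
lemma aux_intervalIntegrable {γ : ℝ} (hγ0 : 0 < γ) (p q : ℝ) :
    IntervalIntegrable (fun t : ℝ => |t| ^ (γ - 1)) volume p q := by
  have base : ∀ c : ℝ, 0 ≤ c →
      IntervalIntegrable (fun t : ℝ => |t| ^ (γ - 1)) volume 0 c := by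
    intro c hc
    have h := intervalIntegral.intervalIntegrable_rpow' (a := 0) (b := c)
      (show (-1:ℝ) < γ - 1 by linarith)
    rw [intervalIntegrable_iff] at h ⊢
    refine h.congr_fun ?_ measurableSet_uIoc
    intro t ht
    rw [Set.uIoc_of_le hc] at ht
    dsimp only
    rw [abs_of_pos ht.1]
  have base' : ∀ c : ℝ, IntervalIntegrable (fun t : ℝ => |t| ^ (γ - 1)) volume 0 c := by
    intro c
    rcases le_total 0 c with hc | hc
    · exact base c hc
    · rw [IntervalIntegrable.iff_comp_neg]
      simp only [abs_neg, neg_zero]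
      exact base (-c) (by linarith)
  exact (base' p).symm.trans (base' q)

/-- Value of the integral of `|t|^(γ-1)` over nonnegative intervals. -/
lemma aux_integral_nonneg_interval {γ : ℝ} (hγ0 : 0 < γ) {p q : ℝ} (hp : 0 ≤ p) (hpq : p ≤ q) :
    ∫ t in p..q, |t| ^ (γ - 1) = (q ^ γ - p ^ γ) / γ := by
  have hcong : ∫ t in p..q, |t| ^ (γ - 1) = ∫ t in p..q, t ^ (γ - 1) := by
    refine intervalIntegral.integral_congr ?_
    intro t ht
    rw [Set.uIcc_of_le hpq] at ht
    have h0t : 0 ≤ t := le_trans hp ht.1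
    dsimp only
    rw [abs_of_nonneg h0t]
  rw [hcong, integral_rpow (Or.inl (by linarith))]
  have hexp : γ - 1 + 1 = γ := by ring
  rw [hexp]

/-- The key bound: integral of `|t|^(γ-1)` over any interval of length `L` is at most
`2 (L/2)^γ / γ`. -/
lemma aux_key_interval {γ : ℝ} (hγ0 : 0 < γ) (hγ1 : γ < 1) {a b : ℝ} (hab : a ≤ b) :
    ∫ t in a..b, |t| ^ (γ - 1) ≤ 2 * ((b - a) / 2) ^ γ / γ := by
  have h2γ : (2:ℝ) ^ γ ≤ 2 := by
    calc (2:ℝ) ^ γ ≤ (2:ℝ) ^ (1:ℝ) :=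
          Real.rpow_le_rpow_of_exponent_le (by norm_num) hγ1.le
    _ = 2 := Real.rpow_one 2
  -- `L^γ ≤ 2 (L/2)^γ` for `L ≥ 0`
  have hdouble : ∀ L : ℝ, 0 ≤ L → L ^ γ ≤ 2 * (L / 2) ^ γ := by
    intro L hL
    have h2pos : (0:ℝ) < 2 ^ γ := Real.rpow_pos_of_pos (by norm_num) γ
    rw [Real.div_rpow hL (by norm_num : (0:ℝ) ≤ 2), ← mul_div_assoc, le_div_iff₀ h2pos]
    nlinarith [Real.rpow_nonneg hL γ]
  have case1 : ∀ p q : ℝ, 0 ≤ p → p ≤ q →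
      ∫ t in p..q, |t| ^ (γ - 1) ≤ 2 * ((q - p) / 2) ^ γ / γ := by
    intro p q hp hpq
    rw [aux_integral_nonneg_interval hγ0 hp hpq]
    have hnum : q ^ γ - p ^ γ ≤ 2 * ((q - p) / 2) ^ γ := by
      have hsub : q ^ γ ≤ p ^ γ + (q - p) ^ γ := by
        have := aux_rpow_subadd hγ0.le hγ1.le hp (by linarith : (0:ℝ) ≤ q - p)
        simpa using this
      have := hdouble (q - p) (by linarith)
      linarith
    exact (div_le_div_iff_of_pos_right hγ0).2 hnum
  rcases le_or_gt 0 a with ha | ha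
  · exact case1 a b ha hab
  rcases le_or_gt b 0 with hb | hb
  · -- b ≤ 0 : reflect
    have hrefl : ∫ t in a..b, |t| ^ (γ - 1) = ∫ t in (-b)..(-a), |t| ^ (γ - 1) := by
      have h := intervalIntegral.integral_comp_neg (a := -b) (b := -a)
        (fun t => |t| ^ (γ - 1))
      simp only [abs_neg, neg_neg] at h
      exact h.symm
    rw [hrefl]
    have := case1 (-b) (-a) (by linarith) (by linarith)
    calc ∫ t in (-b)..(-a), |t| ^ (γ - 1) ≤ 2 * (((-a) - (-b)) / 2) ^ γ / γ := this
    _ = 2 * ((b - a) / 2) ^ γ / γ := by ring_nf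
  · -- a < 0 < b : split at 0
    have hsplit : ∫ t in a..b, |t| ^ (γ - 1)
        = (∫ t in a..(0:ℝ), |t| ^ (γ - 1)) + ∫ t in (0:ℝ)..b, |t| ^ (γ - 1) :=
      (intervalIntegral.integral_add_adjacent_intervals
        (aux_intervalIntegrable hγ0 a 0) (aux_intervalIntegrable hγ0 0 b)).symm
    have hneg : ∫ t in a..(0:ℝ), |t| ^ (γ - 1) = ∫ t in (0:ℝ)..(-a), |t| ^ (γ - 1) := by
      have h := intervalIntegral.integral_comp_neg (a := a) (b := 0)
        (fun t => |t| ^ (γ - 1))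
      simp only [abs_neg, neg_zero] at h
      exact h
    rw [hsplit, hneg, aux_integral_nonneg_interval hγ0 le_rfl (by linarith),
      aux_integral_nonneg_interval hγ0 le_rfl hb.le]
    rw [Real.zero_rpow hγ0.ne', sub_zero, sub_zero, ← add_div]
    apply (div_le_div_iff_of_pos_right hγ0).2
    have := aux_rpow_concave hγ0.le hγ1.le (by linarith : (0:ℝ) ≤ -a) hb.le
    calc (-a) ^ γ + b ^ γ ≤ 2 * (((-a) + b) / 2) ^ γ := this
    _ = 2 * ((b - a) / 2) ^ γ := by ring_nf

theorem stmt2 (γ : ℝ) (hγ : γ ∈ Set.Ioo (0 : ℝ) 1) (f : ℝ → ℝ) (hf : memF f)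
    (ε : ℝ) (hε : 0 < ε) (x : ℝ) (hx : x ≠ 0) :
    (∫ y, |x - y| ^ (γ - 1) * scaled f ε y)
      ≤ (⨆ y, |f y|) * (2 ^ (2 - γ) / γ) * |x| ^ (γ - 1) := by
  obtain ⟨hγ0, hγ1⟩ := hγ
  obtain ⟨hf0, -, hfc, hfs, hfi⟩ := hf
  have hc : Continuous f := hfc.continuous
  have hcs : HasCompactSupport f := by
    apply HasCompactSupport.intro (isCompact_closedBall (0:ℝ) 1)
    intro y hy
    by_contra h
    exact hy (Metric.ball_subset_closedBall (hfs h))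
  set M : ℝ := ⨆ y, |f y| with hM
  have hbdd : BddAbove (Set.range fun y => |f y|) := by
    have := hc.abs.bddAbove_range_of_hasCompactSupport (hcs.abs)
    exact this
  have hMle : ∀ y, f y ≤ M := fun y => (le_abs_self _).trans (le_ciSup hbdd y)
  have hint : Integrable f := hc.integrable_of_hasCompactSupport hcs
  -- M ≥ 1/2
  have hMhalf : 1/2 ≤ M := by
    have hsub : ∀ y, y ∉ Set.Icc (-1:ℝ) 1 → f y = 0 := by
      intro y hy
      by_contra h
      have := hfs h
      rw [Metric.mem_ball, Real.dist_eq, sub_zero] at this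
      obtain ⟨ha1, ha2⟩ := abs_lt.1 this
      exact hy ⟨by linarith, by linarith⟩
    have h1 : (1:ℝ) = ∫ y in Set.Icc (-1:ℝ) 1, f y := by
      rw [setIntegral_eq_integral_of_forall_compl_eq_zero hsub, hfi]
    have h2 : ∫ y in Set.Icc (-1:ℝ) 1, f y ≤ ∫ _ in Set.Icc (-1:ℝ) 1, M := by
      apply setIntegral_mono_on hint.integrableOn (integrableOn_const ?_) measurableSet_Icc
      · exact fun y _ => hMle y
      · rw [Real.volume_Icc]; exact ENNReal.ofReal_ne_top
    have h3 : ∫ _ in Set.Icc (-1:ℝ) 1, M = 2 * M := by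
      rw [setIntegral_const, Real.volume_real_Icc, smul_eq_mul]
      norm_num
    linarith
  have hM0 : 0 < M := by linarith
  -- properties of g := scaled f ε
  set g : ℝ → ℝ := scaled f ε with hg
  have hg0 : ∀ y, 0 ≤ g y := fun y => mul_nonneg (by positivity) (hf0 _)
  have hgsupp : ∀ y, ¬ |y| < ε → g y = 0 := by
    intro y hy
    have : f (y / ε) = 0 := by
      by_contra h
      have := hfs h
      rw [Metric.mem_ball, Real.dist_eq, sub_zero, abs_div, abs_of_pos hε,
        div_lt_one hε] at this
      exact hy this
    simp [hg, scaled, this]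
  have hgle : ∀ y, g y ≤ M / ε := by
    intro y
    rw [div_eq_inv_mul]
    exact mul_le_mul_of_nonneg_left (hMle _) (by positivity)
  have hgint : Integrable g := by
    have := (hint.comp_div hε.ne').const_mul ε⁻¹
    exact this
  have hgintegral : ∫ y, g y = 1 := by
    have h1 : ∫ y, g y = ε⁻¹ * ∫ y, f (y / ε) := by
      simp only [hg, scaled]
      exact integral_const_mul _ _
    rw [h1, MeasureTheory.Measure.integral_comp_div f ε, hfi, smul_eq_mul, abs_of_pos hε]
    field_simp
  -- nonnegativity of integrand
  have hLnn : (0 : ℝ → ℝ) ≤ᵐ[volume] fun y => |x - y| ^ (γ - 1) * g y := by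
    filter_upwards with y
    exact mul_nonneg (Real.rpow_nonneg (abs_nonneg _) _) (hg0 y)
  have hxpos : 0 < |x| := abs_pos.2 hx
  -- (|x|/2)^(γ-1) = 2^(1-γ) * |x|^(γ-1)
  have hsplit : (|x| / 2) ^ (γ - 1) = 2 ^ (1 - γ) * |x| ^ (γ - 1) := by
    rw [Real.div_rpow (abs_nonneg x) (by norm_num : (0:ℝ) ≤ 2), div_eq_mul_inv,
      ← Real.rpow_neg (by norm_num : (0:ℝ) ≤ 2), neg_sub, mul_comm]
  have h2sub : (2:ℝ) ^ (2 - γ) = 2 * 2 ^ (1 - γ) := by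
    rw [show (2:ℝ) - γ = 1 + (1 - γ) by ring, Real.rpow_add (by norm_num : (0:ℝ) < 2),
      Real.rpow_one]
  have h2pos : (0:ℝ) < 2 ^ (1 - γ) := Real.rpow_pos_of_pos (by norm_num) _
  rcases le_or_gt (2 * ε) |x| with hcase | hcase
  · -- far case: |x| ≥ 2ε
    have hptwise : ∀ y, |x - y| ^ (γ - 1) * g y ≤ 2 ^ (1 - γ) * |x| ^ (γ - 1) * g y := by
      intro y
      rcases eq_or_ne (g y) 0 with h0 | h0
      · rw [h0]; simp
      · have hylt : |y| < ε := by
          by_contra h; exact h0 (hgsupp y h)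
        have hd : |x| / 2 ≤ |x - y| := by
          have := abs_sub_abs_le_abs_sub x y
          have h1 : |x| - |y| ≤ |x - y| := this
          linarith
        have := Real.rpow_le_rpow_of_nonpos (by linarith : 0 < |x| / 2) hd
          (by linarith : γ - 1 ≤ 0)
        rw [hsplit] at this
        exact mul_le_mul_of_nonneg_right this (hg0 y)
    have hDint : Integrable (fun y => 2 ^ (1 - γ) * |x| ^ (γ - 1) * g y) :=
      hgint.const_mul _
    have h1 : (∫ y, |x - y| ^ (γ - 1) * g y)
        ≤ ∫ y, 2 ^ (1 - γ) * |x| ^ (γ - 1) * g y :=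
      integral_mono_of_nonneg hLnn hDint (Eventually.of_forall hptwise)
    have h2 : (∫ y, 2 ^ (1 - γ) * |x| ^ (γ - 1) * g y)
        = 2 ^ (1 - γ) * |x| ^ (γ - 1) := by
      rw [integral_const_mul, hgintegral, mul_one]
    rw [h2] at h1
    refine h1.trans ?_
    have hxnn : (0:ℝ) ≤ |x| ^ (γ - 1) := Real.rpow_nonneg (abs_nonneg _) _
    have hkey : 2 ^ (1 - γ) ≤ M * (2 ^ (2 - γ) / γ) := by
      rw [h2sub, ← mul_div_assoc, le_div_iff₀ hγ0]
      nlinarith [mul_nonneg (show (0:ℝ) ≤ 2 * M - 1 by linarith) h2pos.le,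
        mul_nonneg (show (0:ℝ) ≤ 1 - γ by linarith) h2pos.le]
    exact mul_le_mul_of_nonneg_right hkey hxnn
  · -- near case: |x| < 2ε
    set s : Set ℝ := Set.Ioc (-ε) ε with hs
    set ψ : ℝ → ℝ := s.indicator (fun y => M / ε * |x - y| ^ (γ - 1)) with hψ
    have hptwise : ∀ y, |x - y| ^ (γ - 1) * g y ≤ ψ y := by
      intro y
      by_cases hy : y ∈ s
      · rw [hψ, Set.indicator_of_mem hy]
        calc |x - y| ^ (γ - 1) * g y ≤ |x - y| ^ (γ - 1) * (M / ε) :=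
              mul_le_mul_of_nonneg_left (hgle y) (Real.rpow_nonneg (abs_nonneg _) _)
        _ = M / ε * |x - y| ^ (γ - 1) := by ring
      · have hyabs : ¬ |y| < ε := by
          intro h
          rcases abs_lt.1 h with ⟨h1, h2⟩
          exact hy ⟨by linarith, by linarith⟩
        rw [hgsupp y hyabs, mul_zero, hψ, Set.indicator_of_notMem hy]
    -- integrability of ψ
    have hII : IntervalIntegrable (fun y => |x - y| ^ (γ - 1)) volume (-ε) ε := by
      have h := ((aux_intervalIntegrable hγ0 (x - ε) (x + ε)).comp_sub_left x).symm
      have e1 : x - (x + ε) = -ε := by ring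
      have e2 : x - (x - ε) = ε := by ring
      rwa [e1, e2] at h
    have hIO : IntegrableOn (fun y => |x - y| ^ (γ - 1)) s := by
      have := intervalIntegrable_iff.1 hII
      rwa [Set.uIoc_of_le (by linarith : -ε ≤ ε)] at this
    have hψint : Integrable ψ := by
      rw [hψ, integrable_indicator_iff measurableSet_Ioc]
      exact (hIO.const_mul _)
    have h1 : (∫ y, |x - y| ^ (γ - 1) * g y) ≤ ∫ y, ψ y :=
      integral_mono_of_nonneg hLnn hψint (Eventually.of_forall hptwise)
    have h2 : (∫ y, ψ y) = M / ε * ∫ y in (-ε)..ε, |x - y| ^ (γ - 1) := by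
      rw [hψ, integral_indicator measurableSet_Ioc,
        ← intervalIntegral.integral_of_le (show -ε ≤ ε by linarith)]
      rw [intervalIntegral.integral_const_mul]
    have h3 : (∫ y in (-ε)..ε, |x - y| ^ (γ - 1)) = ∫ t in (x - ε)..(x + ε), |t| ^ (γ - 1) := by
      have := intervalIntegral.integral_comp_sub_left (fun t => |t| ^ (γ - 1)) x
        (a := -ε) (b := ε)
      rwa [sub_neg_eq_add] at this
    have h4 : (∫ t in (x - ε)..(x + ε), |t| ^ (γ - 1)) ≤ 2 * ε ^ γ / γ := by
      have := aux_key_interval hγ0 hγ1 (show x - ε ≤ x + ε by linarith)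
      have e : (x + ε - (x - ε)) / 2 = ε := by ring
      rwa [e] at this
    have hMε : 0 ≤ M / ε := by positivity
    have h5 : (∫ y, ψ y) ≤ M / ε * (2 * ε ^ γ / γ) := by
      rw [h2, h3]
      exact mul_le_mul_of_nonneg_left h4 hMε
    refine h1.trans (h5.trans ?_)
    -- M/ε * (2 ε^γ/γ) = (2M/γ) ε^(γ-1) ≤ (2M/γ) 2^(1-γ) |x|^(γ-1) = RHS
    have hεpow : M / ε * (2 * ε ^ γ / γ) = 2 * M / γ * ε ^ (γ - 1) := by
      rw [Real.rpow_sub hε, Real.rpow_one]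
      field_simp
    have hεle : ε ^ (γ - 1) ≤ (|x| / 2) ^ (γ - 1) :=
      Real.rpow_le_rpow_of_nonpos (by linarith : 0 < |x| / 2) (by linarith : |x| / 2 ≤ ε)
        (by linarith : γ - 1 ≤ 0)
    rw [hεpow]
    calc 2 * M / γ * ε ^ (γ - 1) ≤ 2 * M / γ * ((|x| / 2) ^ (γ - 1)) :=
          mul_le_mul_of_nonneg_left hεle (by positivity)
    _ = M * (2 ^ (2 - γ) / γ) * |x| ^ (γ - 1) := by
          rw [hsplit, h2sub]; ring
end

section
/- Let k ≥ 2 be an integer and α ∈ (1 − 1/k, 1). Define b : ℝ² → (0,∞) by b(z,w) := (1 + |z + w|^α)^{−1} · ((1 + |z|^α)^{−1} + (1 + |w|^α)^{−1}). Let g : ℝ → ℂ be measurable with |g(x)| ≤ C/(1 + |x|) for all x ∈ ℝ, for some constant C > 0. Then ∫_{ℝ^{2k}} |g(z₁ + … + z_k)| · |g(w₁ + … + w_k)| · b(z₁,w₁) ⋯ b(z_k,w_k) dz₁ … dz_k dw₁ … dw_k < ∞. -/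
open MeasureTheory Filter Set
open scoped ENNReal

/-- The kernel `b(z,w) = (1+|z+w|^α)⁻¹ ((1+|z|^α)⁻¹ + (1+|w|^α)⁻¹)`. -/
noncomputable def bKer (α : ℝ) (z w : ℝ) : ℝ :=
  (1 + |z + w| ^ α)⁻¹ * ((1 + |z| ^ α)⁻¹ + (1 + |w| ^ α)⁻¹)

/-!
Write `h(u) = (1 + |u|)⁻¹`, so that `|g| ≤ C h`. Integrating over the fibres of
`(z, w) ↦ (∑ zᵢ, ∑ wᵢ)`, the integral is at most `C² ∫_{ℝ²} (h ⊗ h) · b^{*k}`, where `b^{*k}` is the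
`k`-fold convolution power of `b` on `ℝ²`. Since
`b(z,w)^r ≲ (1+|z+w|)^{-αr} ((1+|z|)^{-αr} + (1+|w|)^{-αr})`, `b ∈ L^r(ℝ²)` as soon as `αr > 1`, and
Young's inequality puts `b^{*k}` in `L^q` with `1/q = k/r - (k-1)`, which is positive when
`r < k/(k-1)`. The two constraints on `r` are compatible exactly when `α > 1 - 1/k`. Finally
`h ⊗ h ∈ L^p` for every `p > 1`, in particular for the exponent conjugate to `q`, and Hölder's
inequality concludes.
-/

theorem ENNReal.lintegral_mul_mul_rpow_le {α : Type*} [MeasurableSpace α] {μ : Measure α}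
    {f g h : α → ℝ≥0∞} (hf : AEMeasurable f μ) (hg : AEMeasurable g μ) (hh : AEMeasurable h μ)
    {a b c : ℝ} (ha : 0 ≤ a) (hb : 0 ≤ b) (hc : 0 ≤ c) (habc : a + b + c = 1) :
    ∫⁻ x, f x ^ a * g x ^ b * h x ^ c ∂μ ≤
      (∫⁻ x, f x ∂μ) ^ a * (∫⁻ x, g x ∂μ) ^ b * (∫⁻ x, h x ∂μ) ^ c := by
  have := ENNReal.lintegral_prod_norm_pow_le (μ := μ) Finset.univ (f := ![f, g, h])
    (p := ![a, b, c]) (by intro i _; fin_cases i <;> assumption)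
    (by simp [Fin.sum_univ_three, habc]) (by intro i _; fin_cases i <;> assumption)
  simpa [Fin.prod_univ_three, mul_assoc] using this

theorem ENNReal.rpow_mul_rpow_eq_self_of_mul_add_eq_one (x : ℝ≥0∞) {c u v : ℝ} (hc : 0 ≤ c)
    (hu : 0 ≤ u) (hv : 0 ≤ v) (h : c * (u + v) = 1) : (x ^ c) ^ u * (x ^ c) ^ v = x := by
  rw [← ENNReal.rpow_mul, ← ENNReal.rpow_mul,
    ← ENNReal.rpow_add_of_nonneg _ _ (mul_nonneg hc hu) (mul_nonneg hc hv), ← mul_add, h,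
    ENNReal.rpow_one]

namespace MeasureTheory

variable {G : Type*} [MeasurableSpace G] {μ : Measure G}

section AddGroup

variable [AddGroup G] [MeasurableAdd₂ G] [MeasurableNeg G] [SFinite μ] [μ.IsAddLeftInvariant]

theorem lintegral_mul_lconvolution {H f g : G → ℝ≥0∞} (hH : Measurable H) (hf : Measurable f)
    (hg : Measurable g) :
    ∫⁻ s, H s * (f ⋆ₗ[μ] g) s ∂μ = ∫⁻ a, f a * ∫⁻ b, H (a + b) * g b ∂μ ∂μ := by
  calc ∫⁻ s, H s * (f ⋆ₗ[μ] g) s ∂μ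
      = ∫⁻ s, ∫⁻ a, f a * (H s * g (-a + s)) ∂μ ∂μ := by
        refine lintegral_congr fun s => ?_
        rw [lconvolution_def, ← lintegral_const_mul _ (by fun_prop)]
        exact lintegral_congr fun a => by ring
    _ = ∫⁻ a, ∫⁻ s, f a * (H s * g (-a + s)) ∂μ ∂μ :=
        lintegral_lintegral_swap (by fun_prop)
    _ = ∫⁻ a, f a * ∫⁻ b, H (a + b) * g b ∂μ ∂μ := by
        refine lintegral_congr fun a => ?_
        rw [lintegral_const_mul _ (by fun_prop),
          ← lintegral_add_left_eq_self (fun s => H s * g (-a + s)) a]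
        simp

theorem lintegral_lconvolution {f g : G → ℝ≥0∞} (hf : Measurable f) (hg : Measurable g) :
    ∫⁻ s, (f ⋆ₗ[μ] g) s ∂μ = (∫⁻ a, f a ∂μ) * ∫⁻ b, g b ∂μ := by
  simpa [lintegral_const_mul', lintegral_mul_const _ hf] using
    lintegral_mul_lconvolution (μ := μ) (H := 1) measurable_const hf hg

end AddGroup

theorem lintegral_prod_comp_add_mul [AddGroup G] [MeasurableAdd₂ G] [SFinite μ]
    [μ.IsAddLeftInvariant] {φ ψ : G → ℝ≥0∞} (hφ : Measurable φ) (hψ : Measurable ψ) :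
    ∫⁻ x, φ (x.1 + x.2) * ψ x.1 ∂μ.prod μ = (∫⁻ u, φ u ∂μ) * ∫⁻ u, ψ u ∂μ := by
  calc ∫⁻ x, φ (x.1 + x.2) * ψ x.1 ∂μ.prod μ
      = ∫⁻ x, (∫⁻ u, φ u ∂μ) * ψ x ∂μ := by
        rw [lintegral_prod _ (by fun_prop)]
        refine lintegral_congr fun x => ?_
        dsimp only
        rw [lintegral_mul_const _ (by fun_prop), lintegral_add_left_eq_self φ x]
    _ = (∫⁻ u, φ u ∂μ) * ∫⁻ u, ψ u ∂μ := lintegral_const_mul _ hψ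

section Young

variable [AddCommGroup G] [MeasurableAdd₂ G] [MeasurableNeg G] [μ.IsAddLeftInvariant]
  [μ.IsNegInvariant] {f g : G → ℝ≥0∞} {p q r : ℝ}

theorem lconvolution_apply_le_of_young_exponents (hf : Measurable f) (hg : Measurable g)
    (hp : 1 ≤ p) (hq : 1 ≤ q) (hr : 0 < r) (hpqr : 1 / p + 1 / q = 1 + 1 / r) (s : G) :
    (f ⋆ₗ[μ] g) s ≤ ((fun x => f x ^ p) ⋆ₗ[μ] fun x => g x ^ q) s ^ (1 / r) *
      (∫⁻ x, f x ^ p ∂μ) ^ (1 - 1 / q) * (∫⁻ x, g x ^ q ∂μ) ^ (1 - 1 / p) := by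
  have hp' : 1 / p ≤ 1 := (div_le_one (by linarith)).2 hp
  have hq' : 1 / q ≤ 1 := (div_le_one (by linarith)).2 hq
  have hr' : 0 ≤ 1 / r := by positivity
  have hsplit : ∀ a b : ℝ≥0∞, a * b =
      (a ^ p * b ^ q) ^ (1 / r) * (a ^ p) ^ (1 - 1 / q) * (b ^ q) ^ (1 - 1 / p) := by
    intro a b
    calc a * b = ((a ^ p) ^ (1 / r) * (a ^ p) ^ (1 - 1 / q)) *
          ((b ^ q) ^ (1 / r) * (b ^ q) ^ (1 - 1 / p)) := by
          rw [ENNReal.rpow_mul_rpow_eq_self_of_mul_add_eq_one a (by linarith) hr' (by linarith)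
              (by rw [show 1 / r + (1 - 1 / q) = 1 / p by linarith]; field_simp),
            ENNReal.rpow_mul_rpow_eq_self_of_mul_add_eq_one b (by linarith) hr' (by linarith)
              (by rw [show 1 / r + (1 - 1 / p) = 1 / q by linarith]; field_simp)]
      _ = _ := by rw [ENNReal.mul_rpow_of_nonneg _ _ hr']; ring
  have hshift : ∫⁻ y, g (-y + s) ^ q ∂μ = ∫⁻ x, g x ^ q ∂μ := by
    simp_rw [neg_add_eq_sub]
    exact lintegral_sub_left_eq_self (fun x => g x ^ q) s
  rw [lconvolution_def, lconvolution_def, ← hshift]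
  simp_rw [hsplit (f _) (g _)]
  exact ENNReal.lintegral_mul_mul_rpow_le (by fun_prop) (by fun_prop) (by fun_prop) hr'
    (by linarith) (by linarith) (by linarith)

theorem lintegral_lconvolution_rpow_le [SFinite μ] (hf : Measurable f) (hg : Measurable g)
    (hp : 1 ≤ p) (hq : 1 ≤ q) (hr : 0 < r) (hpqr : 1 / p + 1 / q = 1 + 1 / r) :
    (∫⁻ s, (f ⋆ₗ[μ] g) s ^ r ∂μ) ^ (1 / r) ≤
      (∫⁻ x, f x ^ p ∂μ) ^ (1 / p) * (∫⁻ x, g x ^ q ∂μ) ^ (1 / q) := by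
  set A := ∫⁻ x, f x ^ p ∂μ
  set B := ∫⁻ x, g x ^ q ∂μ
  have hp' : 1 / p ≤ 1 := (div_le_one (by linarith)).2 hp
  have hq' : 1 / q ≤ 1 := (div_le_one (by linarith)).2 hq
  have hr' : 0 ≤ 1 / r := by positivity
  have hpow : ∀ s, (f ⋆ₗ[μ] g) s ^ r ≤ ((fun x => f x ^ p) ⋆ₗ[μ] fun x => g x ^ q) s *
      (A ^ (1 - 1 / q) * B ^ (1 - 1 / p)) ^ r := fun s => by
    refine (ENNReal.rpow_le_rpow
      (lconvolution_apply_le_of_young_exponents hf hg hp hq hr hpqr s) hr.le).trans_eq ?_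
    rw [mul_assoc, ENNReal.mul_rpow_of_nonneg _ _ hr.le, ← ENNReal.rpow_mul,
      one_div_mul_cancel hr.ne', ENNReal.rpow_one]
  calc (∫⁻ s, (f ⋆ₗ[μ] g) s ^ r ∂μ) ^ (1 / r)
      ≤ (∫⁻ s, ((fun x => f x ^ p) ⋆ₗ[μ] fun x => g x ^ q) s *
          (A ^ (1 - 1 / q) * B ^ (1 - 1 / p)) ^ r ∂μ) ^ (1 / r) :=
        ENNReal.rpow_le_rpow (lintegral_mono hpow) hr'
    _ = (A * B) ^ (1 / r) * (A ^ (1 - 1 / q) * B ^ (1 - 1 / p)) := by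
        rw [lintegral_mul_const _ (by fun_prop), lintegral_lconvolution (by fun_prop)
          (by fun_prop), ENNReal.mul_rpow_of_nonneg _ _ hr', ← ENNReal.rpow_mul,
          mul_one_div_cancel hr.ne', ENNReal.rpow_one]
    _ = A ^ (1 / p) * B ^ (1 / q) := by
        rw [ENNReal.mul_rpow_of_nonneg _ _ hr', mul_mul_mul_comm,
          ← ENNReal.rpow_add_of_nonneg _ _ hr' (by linarith),
          ← ENNReal.rpow_add_of_nonneg _ _ hr' (by linarith)]
        congr 2 <;> linarith

end Young

section ConvolutionPower

/-- `lconvPow f μ n` is the `(n + 1)`-fold convolution `f ⋆ₗ[μ] ⋯ ⋆ₗ[μ] f`. -/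
noncomputable def lconvPow [Add G] [Neg G] (f : G → ℝ≥0∞) (μ : Measure G) : ℕ → G → ℝ≥0∞
  | 0 => f
  | n + 1 => f ⋆ₗ[μ] lconvPow f μ n

variable [AddCommGroup G] [MeasurableAdd₂ G] [MeasurableNeg G] {f : G → ℝ≥0∞}

theorem measurable_lconvPow [SFinite μ] (hf : Measurable f) : ∀ n, Measurable (lconvPow f μ n)
  | 0 => hf
  | n + 1 => measurable_lconvolution μ hf (measurable_lconvPow hf n)

theorem lintegral_lconvPow_rpow_le [SFinite μ] [μ.IsAddLeftInvariant] [μ.IsNegInvariant]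
    (hf : Measurable f) {r : ℝ} (hr : 1 ≤ r) (n : ℕ) {q : ℝ} (hq : 0 < q)
    (hqr : 1 / q = (n + 1) / r - n) :
    (∫⁻ s, lconvPow f μ n s ^ q ∂μ) ^ (1 / q) ≤ ((∫⁻ x, f x ^ r ∂μ) ^ (1 / r)) ^ (n + 1) := by
  have hr' : 1 / r ≤ 1 := (div_le_one (by linarith)).2 hr
  induction n generalizing q with
  | zero =>
    obtain rfl : q = r := by simpa using hqr
    simp [lconvPow]
  | succ n ih =>
    set t : ℝ := (n + 1) / r - n
    have hqt : 1 / q = t + 1 / r - 1 := by rw [hqr]; push_cast; ring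
    have ht₀ : 0 < t := by
      have : 0 < 1 / q := by positivity
      linarith
    have ht₁ : t ≤ 1 := by
      have : ((n : ℝ) + 1) / r ≤ n + 1 := div_le_self (by positivity) hr
      linarith
    calc (∫⁻ s, lconvPow f μ (n + 1) s ^ q ∂μ) ^ (1 / q)
        ≤ (∫⁻ x, f x ^ r ∂μ) ^ (1 / r) * (∫⁻ s, lconvPow f μ n s ^ t⁻¹ ∂μ) ^ (1 / t⁻¹) :=
          lintegral_lconvolution_rpow_le hf (measurable_lconvPow hf n) hr
            ((one_le_inv₀ ht₀).2 ht₁) hq (by rw [one_div t⁻¹, inv_inv]; linarith)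
      _ ≤ (∫⁻ x, f x ^ r ∂μ) ^ (1 / r) * ((∫⁻ x, f x ^ r ∂μ) ^ (1 / r)) ^ (n + 1) := by
          gcongr
          exact ih (inv_pos.2 ht₀) (by rw [one_div, inv_inv])
      _ = ((∫⁻ x, f x ^ r ∂μ) ^ (1 / r)) ^ (n + 1 + 1) := (pow_succ' _ _).symm

theorem lintegral_pi_mul_prod_eq_lintegral_mul_lconvPow [SigmaFinite μ] [μ.IsAddLeftInvariant]
    (hf : Measurable f) (n : ℕ) {H : G → ℝ≥0∞} (hH : Measurable H) :
    ∫⁻ y, H (∑ i, y i) * ∏ i, f (y i) ∂(Measure.pi fun _ : Fin (n + 1) => μ) =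
      ∫⁻ s, H s * lconvPow f μ n s ∂μ := by
  induction n generalizing H with
  | zero =>
    rw [lconvPow, ← (measurePreserving_funUnique μ (Fin 1)).lintegral_comp (by fun_prop)]
    exact lintegral_congr fun y => by simp
  | succ n ih =>
    rw [← ((measurePreserving_piFinSuccAbove (fun _ => μ) 0).symm).lintegral_comp
      (by fun_prop), lintegral_prod _ (by fun_prop), lconvPow,
      lintegral_mul_lconvolution hH hf (measurable_lconvPow hf n)]
    refine lintegral_congr fun a => ?_
    rw [← ih (H := fun s => H (a + s)) (by fun_prop), ← lintegral_const_mul _ (by fun_prop)]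
    refine lintegral_congr fun y => ?_
    simp only [MeasurableEquiv.piFinSuccAbove_symm_apply, Fin.insertNthEquiv, Equiv.coe_fn_mk,
      Fin.sum_univ_succAbove _ 0, Fin.prod_univ_succAbove _ 0, Fin.insertNth_apply_same,
      Fin.insertNth_apply_succAbove]
    ring

end ConvolutionPower

end MeasureTheory

noncomputable def polyDecay (α u : ℝ) : ℝ≥0∞ := ENNReal.ofReal (1 + |u| ^ α)⁻¹

@[fun_prop]
theorem measurable_polyDecay (α : ℝ) : Measurable (polyDecay α) := by
  unfold polyDecay; fun_prop

theorem polyDecay_rpow_le {α r : ℝ} (hα₀ : 0 ≤ α) (hα₁ : α ≤ 1) (hr : 0 ≤ r) (u : ℝ) :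
    polyDecay α u ^ r ≤ ENNReal.ofReal ((1 + ‖u‖) ^ (-(α * r))) := by
  have hu : 0 < 1 + |u| := by positivity
  have hsub : (1 + |u|) ^ α ≤ 1 + |u| ^ α := by
    simpa using Real.rpow_add_le_add_rpow zero_le_one (abs_nonneg u) hα₀ hα₁
  rw [polyDecay, ENNReal.ofReal_rpow_of_nonneg (by positivity) hr, Real.norm_eq_abs,
    Real.rpow_neg_eq_inv_rpow, Real.rpow_mul (by positivity), Real.inv_rpow hu.le]
  gcongr

theorem lintegral_polyDecay_rpow_lt_top {α r : ℝ} (hα : α ≤ 1) (hr : 0 ≤ r)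
    (hαr : 1 < α * r) : ∫⁻ u, polyDecay α u ^ r < ∞ := by
  have hα₀ : 0 ≤ α := by
    by_contra! h
    nlinarith
  refine (lintegral_mono (polyDecay_rpow_le hα₀ hα hr)).trans_lt ?_
  exact finite_integral_one_add_norm (by simpa using hαr)

theorem ofReal_norm_le_mul_polyDecay_one {E : Type*} [SeminormedAddGroup E] {g : ℝ → E} {C : ℝ}
    (hgb : ∀ x, ‖g x‖ ≤ C / (1 + |x|)) (x : ℝ) :
    ENNReal.ofReal ‖g x‖ ≤ ENNReal.ofReal C * polyDecay 1 x := by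
  rw [polyDecay, Real.rpow_one, ← ENNReal.ofReal_mul' (by positivity), ← div_eq_mul_inv]
  exact ENNReal.ofReal_le_ofReal (hgb x)

noncomputable def polyDecayProd (s : ℝ × ℝ) : ℝ≥0∞ := polyDecay 1 s.1 * polyDecay 1 s.2

@[fun_prop]
theorem measurable_polyDecayProd : Measurable polyDecayProd := by
  unfold polyDecayProd; fun_prop

theorem lintegral_polyDecayProd_rpow_lt_top {p : ℝ} (hp : 1 < p) :
    ∫⁻ s, polyDecayProd s ^ p < ∞ := by
  simp_rw [polyDecayProd, ENNReal.mul_rpow_of_nonneg _ _ (by linarith : (0 : ℝ) ≤ p)]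
  rw [Measure.volume_eq_prod, lintegral_prod_mul (f := fun u => polyDecay 1 u ^ p)
    (g := fun u => polyDecay 1 u ^ p) (by fun_prop) (by fun_prop)]
  have := lintegral_polyDecay_rpow_lt_top le_rfl (by linarith) (by simpa using hp)
  finiteness

theorem bKer_nonneg (α z w : ℝ) : 0 ≤ bKer α z w := by
  unfold bKer; positivity

noncomputable def bKerENN (α : ℝ) (x : ℝ × ℝ) : ℝ≥0∞ := ENNReal.ofReal (bKer α x.1 x.2)

@[fun_prop]
theorem measurable_bKerENN (α : ℝ) : Measurable (bKerENN α) := by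
  unfold bKerENN bKer; fun_prop

theorem bKerENN_eq (α : ℝ) (x : ℝ × ℝ) :
    bKerENN α x = polyDecay α (x.1 + x.2) * (polyDecay α x.1 + polyDecay α x.2) := by
  rw [bKerENN, bKer, ENNReal.ofReal_mul (by positivity), ENNReal.ofReal_add (by positivity)
    (by positivity), polyDecay, polyDecay, polyDecay]

theorem lintegral_bKerENN_rpow_lt_top {α r : ℝ} (hα : α ≤ 1) (hr : 1 ≤ r) (hαr : 1 < α * r) :
    ∫⁻ x, bKerENN α x ^ r < ∞ := by
  set φ := fun u => polyDecay α u ^ r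
  have hφ : ∫⁻ u, φ u < ∞ := lintegral_polyDecay_rpow_lt_top hα (by linarith) hαr
  have hpt (x : ℝ × ℝ) : bKerENN α x ^ r ≤
      2 ^ (r - 1) * (φ (x.1 + x.2) * φ x.1 + φ (x.1 + x.2) * φ x.2) := by
    rw [bKerENN_eq, ENNReal.mul_rpow_of_nonneg _ _ (by linarith)]
    calc _ ≤ polyDecay α (x.1 + x.2) ^ r *
          (2 ^ (r - 1) * (polyDecay α x.1 ^ r + polyDecay α x.2 ^ r)) := by
          gcongr
          exact ENNReal.rpow_add_le_mul_rpow_add_rpow _ _ hr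
      _ = _ := by ring
  have hswap : ∫⁻ x : ℝ × ℝ, φ (x.1 + x.2) * φ x.2 = ∫⁻ x : ℝ × ℝ, φ (x.1 + x.2) * φ x.1 := by
    rw [Measure.volume_eq_prod, ← lintegral_prod_swap]
    simp [add_comm]
  refine (lintegral_mono hpt).trans_lt ?_
  rw [lintegral_const_mul _ (by fun_prop), lintegral_add_left (by fun_prop), hswap,
    Measure.volume_eq_prod, lintegral_prod_comp_add_mul (by fun_prop) (by fun_prop)]
  finiteness

theorem exists_young_exponents {n : ℕ} {α : ℝ} (hα : α ∈ Ioo (1 - 1 / ((n + 1 : ℕ) : ℝ)) 1) :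
    ∃ r q p : ℝ, 1 ≤ r ∧ 1 < α * r ∧ 0 < q ∧ 1 / q = (n + 1) / r - n ∧ p.HolderConjugate q := by
  obtain ⟨hlo, hhi⟩ := hα
  push_cast at hlo
  set t : ℝ := 1 - 1 / (n + 1)
  have ht₀ : 0 ≤ t := by
    have : 1 / ((n : ℝ) + 1) ≤ 1 := (div_le_one (by positivity)).2 (by simp)
    linarith
  have ht : (n + 1) * t = n := by
    simp only [t]
    field_simp
    ring
  -- `1 / r = s` is taken halfway between `n / (n + 1)` and `α`
  set s := (α + t) / 2
  have hs₀ : 0 < s := by simp only [s]; linarith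
  have hs₁ : s < 1 := by simp only [s]; linarith
  have hsα : s < α := by simp only [s]; linarith
  have hq₀ : 0 < (n + 1) * s - n := by
    have : 0 < ((n : ℝ) + 1) * (s - t) := mul_pos (by positivity) (by simp only [s]; linarith)
    linarith
  have hq₁ : (n + 1) * s - n < 1 := by nlinarith
  refine ⟨s⁻¹, ((n + 1) * s - n)⁻¹, (1 - ((n + 1) * s - n))⁻¹, (one_le_inv₀ hs₀).2 hs₁.le,
    ?_, inv_pos.2 hq₀, by simp, Real.HolderConjugate.one_sub_inv_inv hq₀ hq₁⟩
  rw [← div_eq_mul_inv, one_lt_div hs₀]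
  exact hsα

theorem lintegral_polyDecayProd_mul_lconvPow_bKerENN_lt_top {α r q p : ℝ} (hα : α ≤ 1)
    (hr : 1 ≤ r) (hαr : 1 < α * r) (n : ℕ) (hq : 0 < q) (hqr : 1 / q = (n + 1) / r - n)
    (hpq : p.HolderConjugate q) :
    ∫⁻ s, polyDecayProd s * lconvPow (bKerENN α) volume n s < ∞ := by
  have hH := lintegral_polyDecayProd_rpow_lt_top hpq.lt
  have hρ := lintegral_lconvPow_rpow_le (μ := volume) (measurable_bKerENN α) hr n hq hqr
  have hB := lintegral_bKerENN_rpow_lt_top hα hr hαr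
  calc _ ≤ (∫⁻ s, polyDecayProd s ^ p) ^ (1 / p) *
        (∫⁻ s, lconvPow (bKerENN α) volume n s ^ q) ^ (1 / q) :=
        ENNReal.lintegral_mul_le_Lp_mul_Lq volume hpq (by fun_prop)
          (measurable_lconvPow (measurable_bKerENN α) n).aemeasurable
    _ < ∞ := by
        refine ENNReal.mul_lt_top ?_ (hρ.trans_lt ?_)
        · exact ENNReal.rpow_lt_top_of_nonneg (one_div_nonneg.2 hpq.nonneg) hH.ne
        · exact ENNReal.pow_lt_top
            (ENNReal.rpow_lt_top_of_nonneg (one_div_nonneg.2 (by linarith)) hB.ne)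

theorem lintegral_prod_pi_eq_lintegral_mul_lconvPow {H f : ℝ × ℝ → ℝ≥0∞} (hH : Measurable H)
    (hf : Measurable f) (n : ℕ) :
    ∫⁻ x : (Fin (n + 1) → ℝ) × (Fin (n + 1) → ℝ),
        H (∑ i, x.1 i, ∑ i, x.2 i) * ∏ i, f (x.1 i, x.2 i) =
      ∫⁻ s, H s * lconvPow f volume n s := by
  rw [← (volume_measurePreserving_arrowProdEquivProdArrow ℝ ℝ (Fin (n + 1))).lintegral_comp
    (by fun_prop), volume_pi, ← lintegral_pi_mul_prod_eq_lintegral_mul_lconvPow hf n hH]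
  refine lintegral_congr fun y => ?_
  have hsum : ∑ i, y i = (∑ i, (y i).1, ∑ i, (y i).2) := Prod.ext Prod.fst_sum Prod.snd_sum
  simp [MeasurableEquiv.arrowProdEquivProdArrow, Equiv.arrowProdEquivProdArrow, hsum]

theorem ofReal_norm_mul_norm_mul_prod_bKer_le {E : Type*} [SeminormedAddGroup E] {g : ℝ → E}
    {C : ℝ} (hgb : ∀ x, ‖g x‖ ≤ C / (1 + |x|)) (α : ℝ) {k : ℕ} (x : (Fin k → ℝ) × (Fin k → ℝ)) :
    ENNReal.ofReal (‖g (∑ i, x.1 i)‖ * ‖g (∑ i, x.2 i)‖ * ∏ i, bKer α (x.1 i) (x.2 i)) ≤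
      ENNReal.ofReal C ^ 2 *
        (polyDecayProd (∑ i, x.1 i, ∑ i, x.2 i) * ∏ i, bKerENN α (x.1 i, x.2 i)) := by
  rw [ENNReal.ofReal_mul (by positivity), ENNReal.ofReal_mul (by positivity),
    ENNReal.ofReal_prod_of_nonneg fun i _ => bKer_nonneg α _ _]
  calc _ ≤ ENNReal.ofReal C * polyDecay 1 (∑ i, x.1 i) *
        (ENNReal.ofReal C * polyDecay 1 (∑ i, x.2 i)) * ∏ i, bKerENN α (x.1 i, x.2 i) := by
        gcongr ?_ * ?_ * _ <;> exact ofReal_norm_le_mul_polyDecay_one hgb _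
    _ = _ := by rw [polyDecayProd]; ring

theorem stmt8_general (k : ℕ) (α : ℝ) (hα : α ∈ Set.Ioo (1 - 1 / (k : ℝ)) 1)
    (g : ℝ → ℂ) (C : ℝ)
    (hgb : ∀ x : ℝ, ‖g x‖ ≤ C / (1 + |x|)) :
    ∫⁻ p : (Fin k → ℝ) × (Fin k → ℝ),
      ENNReal.ofReal
        (‖g (∑ i, p.1 i)‖ * ‖g (∑ i, p.2 i)‖ * ∏ i, bKer α (p.1 i) (p.2 i)) < ⊤ := by
  obtain ⟨n, rfl⟩ : ∃ n, k = n + 1 :=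
    Nat.exists_eq_add_one.2 <| Nat.pos_of_ne_zero fun hk => by simp [hk] at hα
  obtain ⟨r, q, p, hr, hαr, hq, hqr, hpq⟩ := exists_young_exponents hα
  calc _ ≤ ∫⁻ x : (Fin (n + 1) → ℝ) × (Fin (n + 1) → ℝ), ENNReal.ofReal C ^ 2 *
        (polyDecayProd (∑ i, x.1 i, ∑ i, x.2 i) * ∏ i, bKerENN α (x.1 i, x.2 i)) :=
        lintegral_mono (ofReal_norm_mul_norm_mul_prod_bKer_le hgb α)
    _ = ENNReal.ofReal C ^ 2 * ∫⁻ s, polyDecayProd s * lconvPow (bKerENN α) volume n s := by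
        rw [lintegral_const_mul _ (by fun_prop),
          lintegral_prod_pi_eq_lintegral_mul_lconvPow (by fun_prop) (by fun_prop)]
    _ < ⊤ := ENNReal.mul_lt_top (by finiteness)
        (lintegral_polyDecayProd_mul_lconvPow_bKerENN_lt_top hα.2.le hr hαr n hq hqr hpq)

theorem stmt8 (k : ℕ) (hk : 2 ≤ k) (α : ℝ) (hα : α ∈ Set.Ioo (1 - 1 / (k : ℝ)) 1)
    (g : ℝ → ℂ) (hg : Measurable g) (C : ℝ) (hC : 0 < C)
    (hgb : ∀ x : ℝ, ‖g x‖ ≤ C / (1 + |x|)) :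
    ∫⁻ p : (Fin k → ℝ) × (Fin k → ℝ),
      ENNReal.ofReal
        (‖g (∑ i, p.1 i)‖ * ‖g (∑ i, p.2 i)‖ * ∏ i, bKer α (p.1 i) (p.2 i)) < ⊤ :=
  stmt8_general k α hα g C hgb
end

section
/- Let k ≥ 2 be an integer, α ∈ (1 − 1/k, 1), and let g : ℝ → ℂ be measurable with |g(x)| ≤ C/(1 + |x|) for all x ∈ ℝ, for some constant C > 0. Then for every fixed index j ∈ {1, …, k}, ∫_{ℝ^k} |g(x₁ + … + x_k)|² · ∏_{i ≠ j} (1 + |x_i|^α)^{−k/(k−1)} dx₁ … dx_k < ∞. -/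
open MeasureTheory Filter Set
open scoped ENNReal

/-!
Bound `‖g‖²` by `(C / (1 + |t|))²`. Under the volume-preserving change of variables
`x ↦ ((xᵢ)_{i ≠ j}, x₁ + ⋯ + x_k)` the resulting majorant becomes a product of one-variable
functions, each integrable on `ℝ`: `(1 + |t| ^ α) ^ (-k/(k-1)) ≤ (1 + |t|) ^ (-α k/(k-1))` since
`α ≤ 1`, and `α k/(k-1) > 1` is exactly the condition `α > 1 - 1/k`.
-/

namespace MeasureTheory

variable {G : Type*} [AddCommGroup G] [MeasurableSpace G] [MeasurableAdd₂ G]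
  {μ : Measure G} [SigmaFinite μ] [μ.IsAddRightInvariant]

theorem measurePreserving_removeNth_sum {n : ℕ} (j : Fin (n + 1)) :
    MeasurePreserving (fun x : Fin (n + 1) → G => (j.removeNth x, ∑ i, x i))
      (Measure.pi fun _ => μ) ((Measure.pi fun _ => μ).prod μ) := by
  have hshear : MeasurePreserving (fun z : (Fin n → G) × G => (z.1, z.2 + ∑ i, z.1 i))
      ((Measure.pi fun _ => μ).prod μ) ((Measure.pi fun _ => μ).prod μ) :=
    (MeasurePreserving.id _).skew_product (g := fun (y : Fin n → G) t => t + ∑ i, y i)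
      (by fun_prop) (ae_of_all _ fun _ => map_add_right_eq_self μ _)
  convert hshear.comp (Measure.measurePreserving_swap.comp
    (measurePreserving_piFinSuccAbove (fun _ => μ) j)) using 1
  funext x
  simp [Fin.sum_univ_succAbove _ j]

variable {𝕜 : Type*} [NormedCommRing 𝕜]

theorem Integrable.comp_sum_mul_prod_erase {n : ℕ} {f : G → 𝕜} {w : Fin (n + 1) → G → 𝕜}
    (hf : Integrable f μ) (hw : ∀ i, Integrable (w i) μ) (j : Fin (n + 1)) :
    Integrable (fun x : Fin (n + 1) → G => f (∑ i, x i) * ∏ i ∈ Finset.univ.erase j, w i (x i))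
      (Measure.pi fun _ => μ) := by
  have hprod := (Integrable.fintype_prod (fun i => hw (j.succAbove i))).mul_prod hf
  convert (measurePreserving_removeNth_sum j).integrable_comp_of_integrable hprod using 1
  funext x
  rw [Function.comp_apply, mul_comm, Fin.univ_succAbove _ j, Finset.erase_cons, Finset.prod_map]
  rfl

end MeasureTheory

theorem Real.one_add_rpow_le {s α : ℝ} (hs : 0 ≤ s) (hα₀ : 0 ≤ α) (hα₁ : α ≤ 1) :
    (1 + s) ^ α ≤ 1 + s ^ α := by
  have h := NNReal.rpow_add_le_add_rpow 1 ⟨s, hs⟩ hα₀ hα₁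
  rwa [NNReal.one_rpow, ← NNReal.coe_le_coe] at h

theorem integrable_one_add_abs_rpow_rpow_neg {α p : ℝ} (hα₀ : 0 < α) (hα₁ : α ≤ 1)
    (hαp : 1 < α * p) : Integrable fun t : ℝ => (1 + |t| ^ α) ^ (-p) := by
  have hp : 0 ≤ p := (pos_of_mul_pos_right (one_pos.trans hαp) hα₀.le).le
  refine (integrable_one_add_norm (E := ℝ) (r := α * p) (by simpa using hαp)).mono'
    (by fun_prop : Measurable _).aestronglyMeasurable (ae_of_all _ fun t => ?_)
  have h1t : 0 < 1 + |t| := by positivity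
  rw [Real.norm_of_nonneg (by positivity), Real.norm_eq_abs, neg_mul_eq_mul_neg,
    Real.rpow_mul h1t.le]
  exact Real.rpow_le_rpow_of_nonpos (by positivity)
    (Real.one_add_rpow_le (abs_nonneg t) hα₀.le hα₁) (neg_nonpos.mpr hp)

theorem integrable_div_one_add_abs_sq (C : ℝ) : Integrable fun t : ℝ => (C / (1 + |t|)) ^ 2 := by
  refine ((integrable_one_add_norm (E := ℝ) (r := 2) (by norm_num)).const_mul (C ^ 2)).congr
    (ae_of_all _ fun t => ?_)
  simp [div_eq_mul_inv, mul_pow, Real.rpow_neg (by positivity : (0 : ℝ) ≤ 1 + |t|)]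

theorem one_lt_mul_div_sub_one {K α : ℝ} (hK : 1 < K) (hα : 1 - 1 / K < α) :
    1 < α * (K / (K - 1)) := by
  have h := mul_lt_mul_of_pos_right hα (one_pos.trans hK)
  rw [sub_mul, one_div_mul_cancel (one_pos.trans hK).ne', one_mul] at h
  rwa [mul_div_assoc', one_lt_div (sub_pos.mpr hK)]

theorem stmt9_general (k : ℕ) (hk : 2 ≤ k) (α : ℝ) (hα : α ∈ Set.Ioo (1 - 1 / (k : ℝ)) 1)
    (g : ℝ → ℂ) (C : ℝ)
    (hgb : ∀ x : ℝ, ‖g x‖ ≤ C / (1 + |x|)) (j : Fin k) :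
    ∫⁻ x : Fin k → ℝ,
      ENNReal.ofReal
        (‖g (∑ i, x i)‖ ^ 2 *
          ∏ i ∈ Finset.univ.erase j, (1 + |x i| ^ α) ^ (-((k : ℝ) / ((k : ℝ) - 1)))) < ⊤ := by
  have hk₁ : (1 : ℝ) < k := by exact_mod_cast hk
  have hα₀ : 0 < α := (sub_pos.mpr ((div_lt_one (one_pos.trans hk₁)).mpr hk₁)).trans hα.1
  have hw := integrable_one_add_abs_rpow_rpow_neg hα₀ hα.2.le (one_lt_mul_div_sub_one hk₁ hα.1)
  obtain ⟨n, rfl⟩ : ∃ n, k = n + 1 := ⟨k - 1, by omega⟩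
  have hmajorant := (integrable_div_one_add_abs_sq C).comp_sum_mul_prod_erase (fun _ => hw) j
  refine lt_of_le_of_lt (lintegral_mono fun x => ENNReal.ofReal_le_ofReal ?_)
    hmajorant.lintegral_lt_top
  gcongr
  exact hgb _

theorem stmt9 (k : ℕ) (hk : 2 ≤ k) (α : ℝ) (hα : α ∈ Set.Ioo (1 - 1 / (k : ℝ)) 1)
    (g : ℝ → ℂ) (hg : Measurable g) (C : ℝ) (hC : 0 < C)
    (hgb : ∀ x : ℝ, ‖g x‖ ≤ C / (1 + |x|)) (j : Fin k) :
    ∫⁻ x : Fin k → ℝ,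
      ENNReal.ofReal
        (‖g (∑ i, x i)‖ ^ 2 *
          ∏ i ∈ Finset.univ.erase j, (1 + |x i| ^ α) ^ (-((k : ℝ) / ((k : ℝ) - 1)))) < ⊤ :=
  stmt9_general k hk α hα g C hgb j
end

section
/- Let α, β ∈ (0,1) satisfy α + β > 1, and let t > 0. Then ∫_{ℝ²} |e^{i(x+y)t} − 1|² / |x + y|² · |x|^{−α} |y|^{−β} dx dy < ∞. -/
/-!
Since `|e^{iθ} - 1| ≤ min(|θ|, 2)`, the kernel is at most `C (1 + |x + y|)⁻²`.
Substituting `s = x + y` bounds the integral by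
`∫ C (1 + |s|)⁻² ∫ |x|^{-α} |s - x|^{-β} dx ds`, and the scaling `x = s u` turns the inner
integral into `|s|^{1-α-β} J` with `J = ∫ |u|^{-α} |1 - u|^{-β} du`.
`J` is finite because `α, β < 1` (integrable singularities at `0` and `1`) and `α + β > 1`
(decay at infinity), and `∫ |s|^{1-α-β} (1 + |s|)⁻² ds` is finite because `0 < α + β - 1 < 1`.
-/

open MeasureTheory Set
open scoped ENNReal

lemma rpow_neg_le_mul_rpow_neg {x y c b : ℝ} (hx : 0 < x) (hc : 0 < c) (hxy : x ≤ c * y)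
    (hb : 0 ≤ b) : y ^ (-b) ≤ c ^ b * x ^ (-b) := by
  have hy : 0 < y := (mul_pos_iff_of_pos_left hc).1 (hx.trans_le hxy)
  calc y ^ (-b) = c ^ b * (c * y) ^ (-b) := by
        rw [Real.mul_rpow hc.le hy.le, Real.rpow_neg hc.le, ← mul_assoc,
          mul_inv_cancel₀ (Real.rpow_pos_of_pos hc b).ne', one_mul]
    _ ≤ c ^ b * x ^ (-b) :=
        mul_le_mul_of_nonneg_left (Real.rpow_le_rpow_of_nonpos hx hxy (neg_nonpos.2 hb))
          (by positivity)

theorem integrable_norm_rpow_neg_mul_one_add_norm_rpow_neg {E : Type*} [NormedAddCommGroup E]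
    [NormedSpace ℝ E] [FiniteDimensional ℝ E] [MeasurableSpace E] [BorelSpace E]
    (μ : Measure E) [μ.IsAddHaarMeasure] {a b : ℝ} (ha₀ : 0 ≤ a)
    (ha : a < Module.finrank ℝ E) (hab : Module.finrank ℝ E < a + b) :
    Integrable (fun x : E => ‖x‖ ^ (-a) * (1 + ‖x‖) ^ (-b)) μ := by
  have hd : 1 ≤ Module.finrank ℝ E := by
    have : (0 : ℝ) < Module.finrank ℝ E := ha₀.trans_lt ha
    exact_mod_cast this
  have hmeas : AEStronglyMeasurable (fun x : E => ‖x‖ ^ (-a) * (1 + ‖x‖) ^ (-b)) μ :=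
    (by fun_prop : Measurable _).aestronglyMeasurable
  have hnorm (x : E) : ‖‖x‖ ^ (-a) * (1 + ‖x‖) ^ (-b)‖ = ‖x‖ ^ (-a) * (1 + ‖x‖) ^ (-b) :=
    Real.norm_of_nonneg (by positivity)
  rw [← integrableOn_univ, ← union_compl_self (Metric.ball (0 : E) 1)]
  refine IntegrableOn.union ?_ ?_
  · refine integrableOn_ball_of_norm_le_rpow (C := 1) hd ha (ae_of_all _ fun x => ?_) hmeas
    rw [hnorm, one_mul]
    exact mul_le_of_le_one_right (by positivity)
      (Real.rpow_le_one_of_one_le_of_nonpos (by simp) (by linarith))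
  · refine ((integrable_one_add_norm hab).const_mul (2 ^ a)).integrableOn.mono'
      hmeas.restrict
      (ae_restrict_of_forall_mem Metric.isOpen_ball.measurableSet.compl fun x hx => ?_)
    have hx : 1 ≤ ‖x‖ := by simpa using hx
    rw [hnorm, neg_add, Real.rpow_add (by positivity), ← mul_assoc]
    gcongr
    exact rpow_neg_le_mul_rpow_neg (by positivity) two_pos (by linarith) ha₀

theorem integrable_abs_rpow_neg_mul_one_add_abs_rpow_neg {a b : ℝ} (ha₀ : 0 ≤ a) (ha : a < 1)
    (hab : 1 < a + b) : Integrable fun u : ℝ => |u| ^ (-a) * (1 + |u|) ^ (-b) := by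
  simpa only [Real.norm_eq_abs] using integrable_norm_rpow_neg_mul_one_add_norm_rpow_neg
    (volume : Measure ℝ) ha₀ (by simpa using ha) (by simpa using hab)

/- As `|u| + |1 - u| ≥ 1`, the larger of `|u|` and `|1 - u|` is at least a third of one plus
the smaller one. -/
lemma abs_rpow_neg_mul_abs_one_sub_rpow_neg_le {α β : ℝ} (hα : 0 ≤ α) (hβ : 0 ≤ β) (u : ℝ) :
    |u| ^ (-α) * |1 - u| ^ (-β) ≤
      3 ^ β * (|u| ^ (-α) * (1 + |u|) ^ (-β)) +
        3 ^ α * (|1 - u| ^ (-β) * (1 + |1 - u|) ^ (-α)) := by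
  have h1 : 1 ≤ |u| + |1 - u| := by simpa using abs_add_le u (1 - u)
  rcases le_total |u| |1 - u| with h | h
  · have := rpow_neg_le_mul_rpow_neg (x := 1 + |u|) (y := |1 - u|) (by positivity) three_pos
      (by linarith) hβ
    calc |u| ^ (-α) * |1 - u| ^ (-β) ≤ |u| ^ (-α) * (3 ^ β * (1 + |u|) ^ (-β)) := by
          gcongr
      _ ≤ _ := by
        rw [mul_left_comm]
        exact le_add_of_nonneg_right (by positivity)
  · have := rpow_neg_le_mul_rpow_neg (x := 1 + |1 - u|) (y := |u|) (by positivity) three_pos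
      (by linarith) hα
    calc |u| ^ (-α) * |1 - u| ^ (-β) ≤ 3 ^ α * (1 + |1 - u|) ^ (-α) * |1 - u| ^ (-β) := by
          gcongr
      _ ≤ _ := by
        rw [mul_assoc, mul_comm ((1 + |1 - u|) ^ (-α))]
        exact le_add_of_nonneg_left (by positivity)

theorem integrable_abs_rpow_neg_mul_abs_one_sub_rpow_neg {α β : ℝ} (hα : α ∈ Ioo (0 : ℝ) 1)
    (hβ : β ∈ Ioo (0 : ℝ) 1) (hab : 1 < α + β) :
    Integrable fun u : ℝ => |u| ^ (-α) * |1 - u| ^ (-β) := by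
  have hu := integrable_abs_rpow_neg_mul_one_add_abs_rpow_neg hα.1.le hα.2 hab
  have h1u := (integrable_abs_rpow_neg_mul_one_add_abs_rpow_neg (b := α) hβ.1.le
    hβ.2 (by linarith)).comp_sub_left 1
  refine ((hu.const_mul (3 ^ β)).add (h1u.const_mul (3 ^ α))).mono'
    (by fun_prop : Measurable _).aestronglyMeasurable (ae_of_all _ fun u => ?_)
  rw [Real.norm_of_nonneg (by positivity)]
  exact abs_rpow_neg_mul_abs_one_sub_rpow_neg_le hα.1.le hβ.1.le u

lemma norm_cexp_I_mul_sub_one_sq_div_sq_le (s t : ℝ) :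
    ‖Complex.exp (Complex.I * s * t) - 1‖ ^ 2 / |s| ^ 2 ≤
      (4 * t ^ 2 + 16) * (1 + |s|) ^ (-2 : ℝ) := by
  set e := ‖Complex.exp (Complex.I * s * t) - 1‖
  have he₀ : 0 ≤ e := norm_nonneg _
  have he : e ≤ |s| * |t| := by
    simpa [e, mul_assoc, abs_mul] using Real.norm_exp_I_mul_ofReal_sub_one_le (x := s * t)
  have he₂ : e ≤ 2 := by
    calc e ≤ ‖Complex.exp (Complex.I * ↑(s * t))‖ + ‖(1 : ℂ)‖ := by
          simpa [e, mul_assoc] using norm_sub_le (Complex.exp (Complex.I * ↑(s * t))) 1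
      _ = 2 := by rw [Complex.norm_exp_I_mul_ofReal, norm_one]; norm_num
  rw [Real.rpow_neg (by positivity), Real.rpow_two, ← div_eq_mul_inv,
    le_div_iff₀ (by positivity)]
  rcases eq_or_ne s 0 with rfl | hs
  · simp only [abs_zero, ne_eq, OfNat.ofNat_ne_zero, not_false_eq_true, zero_pow, div_zero,
      zero_mul]
    positivity
  have hs' : 0 < |s| := abs_pos.2 hs
  rw [div_mul_eq_mul_div, div_le_iff₀ (by positivity)]
  rcases le_total |s| 1 with h | h
  · have he_sq : e ^ 2 ≤ |s| ^ 2 * t ^ 2 := by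
      rw [← sq_abs t, ← mul_pow]
      exact pow_le_pow_left₀ he₀ he 2
    have h4 : (1 + |s|) ^ 2 ≤ 4 := by nlinarith
    calc e ^ 2 * (1 + |s|) ^ 2 ≤ |s| ^ 2 * t ^ 2 * 4 := by gcongr
      _ ≤ (4 * t ^ 2 + 16) * |s| ^ 2 := by nlinarith [sq_nonneg s]
  · have he_sq : e ^ 2 ≤ 4 := by nlinarith
    nlinarith [mul_le_mul_of_nonneg_right he_sq (by positivity : (0 : ℝ) ≤ (1 + |s|) ^ 2)]

theorem lintegral_prod_comp_add_mul {G : Type*} [AddCommGroup G] [MeasurableSpace G]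
    [MeasurableAdd₂ G] [MeasurableNeg G] (μ : Measure G) [SFinite μ] [μ.IsAddLeftInvariant]
    {K A B : G → ℝ≥0∞} (hK : Measurable K) (hA : Measurable A) (hB : Measurable B) :
    ∫⁻ p, K (p.1 + p.2) * (A p.1 * B p.2) ∂μ.prod μ =
      ∫⁻ s, K s * ∫⁻ x, A x * B (s - x) ∂μ ∂μ := by
  have hF : Measurable fun q : G × G => K q.2 * (A q.1 * B (q.2 - q.1)) := by fun_prop
  calc ∫⁻ p, K (p.1 + p.2) * (A p.1 * B p.2) ∂μ.prod μ
      = ∫⁻ p, K (p.1 + p.2) * (A p.1 * B (p.1 + p.2 - p.1)) ∂μ.prod μ := by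
        simp only [add_sub_cancel_left]
    _ = ∫⁻ q, K q.2 * (A q.1 * B (q.2 - q.1)) ∂μ.prod μ :=
        (measurePreserving_prod_add μ μ).lintegral_comp hF
    _ = ∫⁻ s, ∫⁻ x, K s * (A x * B (s - x)) ∂μ ∂μ := by
        rw [lintegral_prod _ hF.aemeasurable]
        exact lintegral_lintegral_swap (by fun_prop)
    _ = ∫⁻ s, K s * ∫⁻ x, A x * B (s - x) ∂μ ∂μ := by
        refine lintegral_congr fun s => ?_
        exact lintegral_const_mul (K s) (by fun_prop : Measurable fun x => A x * B (s - x))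

lemma lintegral_eq_ofReal_abs_mul_lintegral_comp_mul_left (g : ℝ → ℝ≥0∞) {a : ℝ}
    (ha : a ≠ 0) : ∫⁻ x, g x = ENNReal.ofReal |a| * ∫⁻ x, g (a * x) := by
  have := (Homeomorph.mulLeft₀ a ha).measurableEmbedding.lintegral_map (μ := volume) g
  simp only [Homeomorph.coe_mulLeft₀] at this
  rw [← this, Real.map_volume_mul_left ha, lintegral_smul_measure, smul_eq_mul, ← mul_assoc,
    ← ENNReal.ofReal_mul (abs_nonneg a), ← abs_mul, mul_inv_cancel₀ ha, abs_one,
    ENNReal.ofReal_one, one_mul]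

lemma lintegral_abs_rpow_neg_mul_abs_sub_rpow_neg (α β : ℝ) {s : ℝ} (hs : s ≠ 0) :
    ∫⁻ x, ENNReal.ofReal (|x| ^ (-α)) * ENNReal.ofReal (|s - x| ^ (-β)) =
      ENNReal.ofReal (|s| ^ (-(α + β - 1))) *
        ∫⁻ u, ENNReal.ofReal (|u| ^ (-α)) * ENNReal.ofReal (|1 - u| ^ (-β)) := by
  have hs' : 0 < |s| := abs_pos.2 hs
  have hscale (u : ℝ) :
      ENNReal.ofReal (|s * u| ^ (-α)) * ENNReal.ofReal (|s - s * u| ^ (-β)) =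
        ENNReal.ofReal (|s| ^ (-α) * |s| ^ (-β)) *
          (ENNReal.ofReal (|u| ^ (-α)) * ENNReal.ofReal (|1 - u| ^ (-β))) := by
    rw [show s - s * u = s * (1 - u) by ring, abs_mul, abs_mul,
      Real.mul_rpow (abs_nonneg _) (abs_nonneg _), Real.mul_rpow (abs_nonneg _) (abs_nonneg _),
      ENNReal.ofReal_mul (by positivity), ENNReal.ofReal_mul (by positivity),
      ENNReal.ofReal_mul (by positivity)]
    ring
  rw [lintegral_eq_ofReal_abs_mul_lintegral_comp_mul_left _ hs]
  simp only [hscale]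
  rw [lintegral_const_mul' _ _ ENNReal.ofReal_ne_top, ← mul_assoc,
    ← ENNReal.ofReal_mul (abs_nonneg s)]
  congr 2
  rw [show -(α + β - 1) = 1 + (-α + -β) by ring, Real.rpow_add hs', Real.rpow_one,
    Real.rpow_add hs']

theorem stmt16_general (α β : ℝ) (hα : α ∈ Set.Ioo (0 : ℝ) 1) (hβ : β ∈ Set.Ioo (0 : ℝ) 1)
    (hab : 1 < α + β) (t : ℝ) :
    ∫⁻ p : ℝ × ℝ,
      ENNReal.ofReal
        (‖Complex.exp (Complex.I * (p.1 + p.2) * t) - 1‖ ^ 2 / |p.1 + p.2| ^ 2 *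
          (|p.1| ^ (-α) * |p.2| ^ (-β))) < ⊤ := by
  set C := 4 * t ^ 2 + 16
  have hJ : ∫⁻ u, ENNReal.ofReal (|u| ^ (-α)) * ENNReal.ofReal (|1 - u| ^ (-β)) < ⊤ := by
    simpa only [ENNReal.ofReal_mul (Real.rpow_nonneg (abs_nonneg _) _)] using
      (integrable_abs_rpow_neg_mul_abs_one_sub_rpow_neg hα hβ hab).lintegral_lt_top
  have hL : ∫⁻ s, ENNReal.ofReal (C * (|s| ^ (-(α + β - 1)) * (1 + |s|) ^ (-2 : ℝ))) < ⊤ :=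
    ((integrable_abs_rpow_neg_mul_one_add_abs_rpow_neg (by linarith) (by linarith [hα.2, hβ.2])
      (by linarith)).const_mul C).lintegral_lt_top
  calc _ ≤ ∫⁻ p : ℝ × ℝ, ENNReal.ofReal (C * (1 + |p.1 + p.2|) ^ (-2 : ℝ)) *
          (ENNReal.ofReal (|p.1| ^ (-α)) * ENNReal.ofReal (|p.2| ^ (-β))) := by
        refine lintegral_mono fun p => ?_
        rw [← ENNReal.ofReal_mul (by positivity), ← ENNReal.ofReal_mul (by positivity)]
        refine ENNReal.ofReal_le_ofReal (mul_le_mul_of_nonneg_right ?_ (by positivity))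
        simpa using norm_cexp_I_mul_sub_one_sq_div_sq_le (p.1 + p.2) t
    _ = ∫⁻ s, ENNReal.ofReal (C * (1 + |s|) ^ (-2 : ℝ)) *
          ∫⁻ x, ENNReal.ofReal (|x| ^ (-α)) * ENNReal.ofReal (|s - x| ^ (-β)) := by
        rw [Measure.volume_eq_prod]
        refine lintegral_prod_comp_add_mul volume
          (K := fun s => ENNReal.ofReal (C * (1 + |s|) ^ (-2 : ℝ)))
          (A := fun x => ENNReal.ofReal (|x| ^ (-α)))
          (B := fun y => ENNReal.ofReal (|y| ^ (-β)))
          ?_ ?_ ?_ <;> fun_prop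
    _ = ∫⁻ s, ENNReal.ofReal (C * (|s| ^ (-(α + β - 1)) * (1 + |s|) ^ (-2 : ℝ))) *
          ∫⁻ u, ENNReal.ofReal (|u| ^ (-α)) * ENNReal.ofReal (|1 - u| ^ (-β)) := by
        refine lintegral_congr_ae ((Measure.ae_ne volume 0).mono fun s hs => ?_)
        dsimp only
        rw [lintegral_abs_rpow_neg_mul_abs_sub_rpow_neg α β hs, ← mul_assoc,
          ← ENNReal.ofReal_mul (by positivity)]
        ring_nf
    _ < ⊤ := by
        rw [lintegral_mul_const _ (by fun_prop)]
        exact ENNReal.mul_lt_top hL hJ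

theorem stmt16 (α β : ℝ) (hα : α ∈ Set.Ioo (0 : ℝ) 1) (hβ : β ∈ Set.Ioo (0 : ℝ) 1)
    (hab : 1 < α + β) (t : ℝ) (ht : 0 < t) :
    ∫⁻ p : ℝ × ℝ,
      ENNReal.ofReal
        (‖Complex.exp (Complex.I * (p.1 + p.2) * t) - 1‖ ^ 2 / |p.1 + p.2| ^ 2 *
          (|p.1| ^ (-α) * |p.2| ^ (-β))) < ⊤ :=
  stmt16_general α β hα hβ hab t
end

section
/- Let k ≥ 2 be an integer, let d satisfy (1/2)(1 − 1/k) < d < 1/2, and let t > 0. Then ∫_{ℝ^k} |e^{i(u₁ + … + u_k)t} − 1|² / |u₁ + … + u_k|² · |u₁|^{−2d} ⋯ |u_k|^{−2d} du₁ … du_k < ∞. -/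
/-!
Write the integrand as `(∏ i, w (u i)) * g (∑ i, u i)` with `w = |·|^(-2d)` and
`g s = |(e^{ist} - 1)/(is)|²`. A scaling `u = s v` shows that for `a, b < 1 < a + b` the
convolution `|·|^(-a) ⋆ |·|^(-b)` equals `c · |·|^(-(a + b - 1))`, where
`c = ∫ |v|^(-a) |1 - v|^(-b) dv` is finite: the singularities at `0` and `1` are integrable and
the integrand decays like `|v|^(-(a + b))`. Integrating out one coordinate at a time, the image of
`∏ i, w (u i) du` under `u ↦ ∑ i, u i` is `C |s|^(-e) ds` with `e = 1 - k (1 - 2d)`, and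
`e > 0` is exactly the lower bound on `d`. Since `g s ≤ min (t², 4 / s²)`, the remaining
integral `∫ |s|^(-e) g s ds` converges at `0` because `e < 1` and at infinity because `e + 2 > 1`.
-/

open MeasureTheory Filter Set
open scoped ENNReal

open Metric

lemma lintegral_fin_succ_eq_lintegral_lintegral_cons {α : Type*} [MeasureSpace α]
    [SigmaFinite (volume : Measure α)] {n : ℕ} {F : (Fin (n + 1) → α) → ℝ≥0∞}
    (hF : Measurable F) :
    ∫⁻ u, F u = ∫⁻ x, ∫⁻ y : Fin n → α, F (Fin.cons x y) := by
  set e := (MeasurableEquiv.piFinSuccAbove (fun _ : Fin (n + 1) => α) 0).symm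
  rw [← (volume_preserving_piFinSuccAbove (fun _ : Fin (n + 1) => α) 0).symm.lintegral_comp_emb
    e.measurableEmbedding, Measure.volume_eq_prod,
    lintegral_prod (fun p => F (e p)) (hF.comp e.measurable).aemeasurable]
  simp [e, MeasurableEquiv.piFinSuccAbove_symm_apply, Fin.insertNthEquiv]

lemma lintegral_mul_lintegral_comp_sub_mul {G : Type*} [MeasurableSpace G] [Sub G]
    [MeasurableSub₂ G] {μ : Measure G} [SFinite μ] {f h g : G → ℝ≥0∞} (hf : Measurable f)
    (hh : Measurable h) (hg : Measurable g) :
    ∫⁻ x, f x * ∫⁻ z, h (z - x) * g z ∂μ ∂μ = ∫⁻ z, (∫⁻ x, f x * h (z - x) ∂μ) * g z ∂μ := by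
  calc ∫⁻ x, f x * ∫⁻ z, h (z - x) * g z ∂μ ∂μ
      = ∫⁻ x, ∫⁻ z, f x * (h (z - x) * g z) ∂μ ∂μ :=
        lintegral_congr fun x => (lintegral_const_mul _ (by fun_prop)).symm
    _ = ∫⁻ z, ∫⁻ x, f x * (h (z - x) * g z) ∂μ ∂μ :=
        lintegral_lintegral_swap (by fun_prop)
    _ = ∫⁻ z, (∫⁻ x, f x * h (z - x) ∂μ) * g z ∂μ :=
        lintegral_congr fun z => by
          rw [← lintegral_mul_const _ (by fun_prop)]
          simp only [mul_assoc]

lemma lintegral_eq_ofReal_abs_mul_lintegral_comp_mul_left_s17 (f : ℝ → ℝ≥0∞) {s : ℝ} (hs : s ≠ 0) :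
    ∫⁻ x, f x = ENNReal.ofReal |s| * ∫⁻ x, f (s * x) := by
  conv_lhs => rw [← Real.smul_map_volume_mul_left hs]
  rw [lintegral_smul_measure, smul_eq_mul]
  exact congrArg _ (lintegral_map_equiv f (MeasurableEquiv.mulLeft₀ s hs))

/-- At `u = 0` this is `0` rather than `∞` (for `a ≠ 0`); `{0}` is a null set. -/
noncomputable def powWeight (a u : ℝ) : ℝ≥0∞ := ENNReal.ofReal (|u| ^ (-a))

section powWeight

variable {a b : ℝ}

@[fun_prop]
lemma measurable_powWeight (a : ℝ) : Measurable (powWeight a) :=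
  (measurable_abs.pow_const _).ennreal_ofReal

lemma powWeight_mul (s v : ℝ) : powWeight a (s * v) = powWeight a s * powWeight a v := by
  rw [powWeight, abs_mul, Real.mul_rpow (abs_nonneg s) (abs_nonneg v),
    ENNReal.ofReal_mul (Real.rpow_nonneg (abs_nonneg s) _)]
  rfl

lemma powWeight_add {u : ℝ} (hu : u ≠ 0) :
    powWeight (a + b) u = powWeight a u * powWeight b u := by
  rw [powWeight, neg_add, Real.rpow_add (abs_pos.2 hu),
    ENNReal.ofReal_mul (Real.rpow_nonneg (abs_nonneg u) _)]
  rfl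

lemma powWeight_neg_one (u : ℝ) : powWeight (-1) u = ENNReal.ofReal |u| := by
  simp [powWeight]

lemma powWeight_le_of_abs_le_mul (hb : 0 ≤ b) {x y c : ℝ} (hx : x ≠ 0) (hc : 0 < c)
    (hxy : |x| ≤ c * |y|) : powWeight b y ≤ ENNReal.ofReal (c ^ b) * powWeight b x := by
  rw [powWeight, powWeight, ← ENNReal.ofReal_mul (by positivity)]
  refine ENNReal.ofReal_le_ofReal ?_
  calc |y| ^ (-b) ≤ (|x| / c) ^ (-b) :=
        Real.rpow_le_rpow_of_nonpos (by positivity) (by rwa [div_le_iff₀' hc]) (by linarith)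
    _ = c ^ b * |x| ^ (-b) := by
        rw [Real.div_rpow (abs_nonneg x) hc.le, Real.rpow_neg hc.le, div_inv_eq_mul, mul_comm]

lemma setLIntegral_powWeight_closedBall_lt_top (ha : a < 1) (r : ℝ) :
    ∫⁻ x in closedBall 0 r, powWeight a x < ⊤ := by
  have hloc : LocallyIntegrable (fun x : ℝ => |x| ^ (-a)) :=
    locallyIntegrable_of_norm_le_rpow (C := 1) (by simp) (by simpa using ha)
      (ae_of_all _ fun x => by simp [abs_of_nonneg (Real.rpow_nonneg (abs_nonneg x) _)])
      (measurable_abs.pow_const _).aestronglyMeasurable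
  exact (hloc.integrableOn_isCompact (isCompact_closedBall 0 r)).setLIntegral_lt_top

lemma setLIntegral_powWeight_compl_closedBall_lt_top (ha : 1 < a) {r : ℝ} (hr : 0 < r) :
    ∫⁻ x in (closedBall 0 r)ᶜ, powWeight a x < ⊤ := by
  have hradial : Integrable (fun x : ℝ => (Ioi r).indicator (· ^ (-a)) ‖x‖) := by
    rw [integrable_fun_norm_addHaar, Module.finrank_self]
    simp only [Nat.sub_self, pow_zero, one_smul]
    rw [integrableOn_indicator_iff measurableSet_Ioi]
    exact (integrableOn_Ioi_rpow_of_lt (by linarith) hr).mono_set inter_subset_left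
  have : IntegrableOn (fun x : ℝ => |x| ^ (-a)) (closedBall 0 r)ᶜ := by
    rw [← integrable_indicator_iff measurableSet_closedBall.compl]
    refine hradial.congr (ae_of_all _ fun x => ?_)
    simp [indicator, Real.norm_eq_abs]
  exact this.setLIntegral_lt_top

lemma setLIntegral_closedBall_powWeight_mul_powWeight_one_sub_lt_top (ha : a < 1) (hb : 0 ≤ b) :
    ∫⁻ v in closedBall 0 2⁻¹, powWeight a v * powWeight b (1 - v) < ⊤ := by
  calc ∫⁻ v in closedBall 0 2⁻¹, powWeight a v * powWeight b (1 - v)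
      ≤ ∫⁻ v in closedBall 0 2⁻¹, powWeight a v * ENNReal.ofReal (2 ^ b) := by
        refine setLIntegral_mono' measurableSet_closedBall fun v hv => ?_
        have hv : |v| ≤ 2⁻¹ := by simpa using hv
        have h1v : |(1 : ℝ)| ≤ 2 * |1 - v| := by
          have := le_abs_self (1 - v)
          rw [abs_one]
          linarith [(abs_le.1 hv).2]
        gcongr
        simpa [powWeight] using powWeight_le_of_abs_le_mul hb one_ne_zero two_pos h1v
    _ = (∫⁻ v in closedBall 0 2⁻¹, powWeight a v) * ENNReal.ofReal (2 ^ b) :=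
        lintegral_mul_const _ (measurable_powWeight a)
    _ < ⊤ := ENNReal.mul_lt_top (setLIntegral_powWeight_closedBall_lt_top ha _)
        ENNReal.ofReal_lt_top

lemma setLIntegral_compl_powWeight_mul_powWeight_one_sub_lt_top (hb : 0 ≤ b)
    (hab : 1 < a + b) :
    ∫⁻ v in (closedBall 0 2⁻¹ ∪ (1 - ·) ⁻¹' closedBall 0 2⁻¹)ᶜ,
      powWeight a v * powWeight b (1 - v) < ⊤ := by
  calc ∫⁻ v in (closedBall 0 2⁻¹ ∪ (1 - ·) ⁻¹' closedBall 0 2⁻¹)ᶜ,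
        powWeight a v * powWeight b (1 - v)
      ≤ ∫⁻ v in (closedBall 0 2⁻¹ ∪ (1 - ·) ⁻¹' closedBall 0 2⁻¹)ᶜ,
          ENNReal.ofReal (3 ^ b) * powWeight (a + b) v := by
        refine setLIntegral_mono' (measurableSet_closedBall.union
          (measurableSet_closedBall.preimage (by fun_prop))).compl fun v hv => ?_
        simp only [compl_union, mem_inter_iff, mem_compl_iff, mem_preimage,
          mem_closedBall_zero_iff, Real.norm_eq_abs, not_le] at hv
        have hv0 : v ≠ 0 := by rintro rfl; norm_num at hv
        have h3 : |v| ≤ 3 * |1 - v| := by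
          have := abs_sub_abs_le_abs_sub v 1
          rw [abs_one, abs_sub_comm] at this
          linarith
        calc powWeight a v * powWeight b (1 - v)
            ≤ powWeight a v * (ENNReal.ofReal (3 ^ b) * powWeight b v) := by
              gcongr
              exact powWeight_le_of_abs_le_mul hb hv0 three_pos h3
          _ = ENNReal.ofReal (3 ^ b) * powWeight (a + b) v := by
              rw [powWeight_add hv0]
              ring
    _ ≤ ∫⁻ v in (closedBall 0 2⁻¹)ᶜ, ENNReal.ofReal (3 ^ b) * powWeight (a + b) v :=
        lintegral_mono_set (compl_subset_compl.2 subset_union_left)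
    _ = ENNReal.ofReal (3 ^ b) * ∫⁻ v in (closedBall 0 2⁻¹)ᶜ, powWeight (a + b) v :=
        lintegral_const_mul _ (measurable_powWeight _)
    _ < ⊤ := ENNReal.mul_lt_top ENNReal.ofReal_lt_top
        (setLIntegral_powWeight_compl_closedBall_lt_top hab (by norm_num))

lemma lintegral_powWeight_mul_powWeight_one_sub_lt_top (ha : a < 1) (hb : b < 1)
    (hab : 1 < a + b) :
    ∫⁻ v, powWeight a v * powWeight b (1 - v) < ⊤ := by
  set S := closedBall (0 : ℝ) 2⁻¹
  have hS : MeasurableSet S := measurableSet_closedBall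
  have hS' : MeasurableSet ((1 - ·) ⁻¹' S) := hS.preimage (by fun_prop)
  -- the reflection `v ↦ 1 - v` exchanges the two singularities
  have hreflect : ∫⁻ v in (1 - ·) ⁻¹' S, powWeight a v * powWeight b (1 - v)
      = ∫⁻ v in S, powWeight b v * powWeight a (1 - v) := by
    rw [← (Measure.measurePreserving_sub_left volume (1 : ℝ)).setLIntegral_comp_preimage_emb
      (MeasurableEquiv.subLeft (1 : ℝ)).measurableEmbedding
      (fun v => powWeight b v * powWeight a (1 - v))]
    refine setLIntegral_congr_fun hS' fun v _ => ?_
    simp only [sub_sub_cancel, mul_comm]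
  rw [← lintegral_add_compl _ (hS.union hS')]
  refine ENNReal.add_lt_top.2 ⟨(lintegral_union_le _ _ _).trans_lt
    (ENNReal.add_lt_top.2 ⟨?_, ?_⟩),
    setLIntegral_compl_powWeight_mul_powWeight_one_sub_lt_top (by linarith) hab⟩
  · exact setLIntegral_closedBall_powWeight_mul_powWeight_one_sub_lt_top ha (by linarith)
  · rw [hreflect]
    exact setLIntegral_closedBall_powWeight_mul_powWeight_one_sub_lt_top hb (by linarith)

lemma lintegral_powWeight_mul_powWeight_sub {s : ℝ} (hs : s ≠ 0) :
    ∫⁻ u, powWeight a u * powWeight b (s - u)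
      = powWeight (a + b - 1) s * ∫⁻ v, powWeight a v * powWeight b (1 - v) := by
  have hscale : ∀ v, powWeight a (s * v) * powWeight b (s - s * v)
      = powWeight a s * powWeight b s * (powWeight a v * powWeight b (1 - v)) := fun v => by
    rw [← mul_one_sub, powWeight_mul, powWeight_mul]
    ring
  rw [lintegral_eq_ofReal_abs_mul_lintegral_comp_mul_left_s17 _ hs]
  simp_rw [hscale]
  rw [lintegral_const_mul _ (by fun_prop), sub_eq_neg_add, powWeight_add hs,
    powWeight_add hs, powWeight_neg_one]
  ring

theorem exists_lintegral_prod_powWeight_mul_comp_sum_eq (ha : a < 1) {n : ℕ}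
    (hn : (n + 1) * (1 - a) < 1) :
    ∃ C : ℝ≥0∞, C ≠ ⊤ ∧ ∀ g : ℝ → ℝ≥0∞, Measurable g →
      ∫⁻ u : Fin (n + 1) → ℝ, (∏ i, powWeight a (u i)) * g (∑ i, u i)
        = C * ∫⁻ s, powWeight (1 - (n + 1) * (1 - a)) s * g s := by
  induction n with
  | zero =>
    refine ⟨1, ENNReal.one_ne_top, fun g hg => ?_⟩
    rw [lintegral_fin_succ_eq_lintegral_lintegral_cons (by fun_prop)]
    simp [volume_pi]
  | succ n ih =>
    push_cast at hn ⊢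
    obtain ⟨C, hC, hCeq⟩ := ih (by nlinarith)
    set e : ℝ := 1 - (n + 1) * (1 - a)
    set I := ∫⁻ v, powWeight a v * powWeight e (1 - v)
    have hI : I < ⊤ :=
      lintegral_powWeight_mul_powWeight_one_sub_lt_top ha (by nlinarith) (by nlinarith)
    have hexp : a + e - 1 = 1 - (n + 1 + 1) * (1 - a) := by ring
    refine ⟨C * I, ENNReal.mul_ne_top hC hI.ne, fun g hg => ?_⟩
    calc ∫⁻ u : Fin (n + 1 + 1) → ℝ, (∏ i, powWeight a (u i)) * g (∑ i, u i)
        = ∫⁻ x, powWeight a x *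
            ∫⁻ y : Fin (n + 1) → ℝ, (∏ i, powWeight a (y i)) * g (x + ∑ i, y i) := by
          rw [lintegral_fin_succ_eq_lintegral_lintegral_cons (by fun_prop)]
          refine lintegral_congr fun x => ?_
          rw [← lintegral_const_mul _ (by fun_prop)]
          simp only [Fin.prod_univ_succ, Fin.sum_univ_succ, Fin.cons_zero, Fin.cons_succ, mul_assoc]
      _ = ∫⁻ x, powWeight a x * (C * ∫⁻ z, powWeight e (z - x) * g z) := by
          refine lintegral_congr fun x => ?_
          rw [hCeq (g <| x + ·) (by fun_prop),
            ← lintegral_add_left_eq_self (fun z => powWeight e (z - x) * g z) x]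
          simp only [add_sub_cancel_left]
      _ = C * ∫⁻ z, (∫⁻ x, powWeight a x * powWeight e (z - x)) * g z := by
          simp_rw [mul_left_comm _ C]
          rw [lintegral_const_mul _ (by fun_prop),
            lintegral_mul_lintegral_comp_sub_mul (by fun_prop) (by fun_prop) hg]
      _ = C * ∫⁻ z, I * (powWeight (1 - (n + 1 + 1) * (1 - a)) z * g z) := by
          congr 1
          refine lintegral_congr_ae ((Measure.ae_ne volume 0).mono fun z hz => ?_)
          dsimp only
          rw [lintegral_powWeight_mul_powWeight_sub hz, hexp]
          ring
      _ = C * I * ∫⁻ s, powWeight (1 - (n + 1 + 1) * (1 - a)) s * g s := by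
          rw [lintegral_const_mul _ (by fun_prop), mul_assoc]

lemma lintegral_powWeight_mul_lt_top (ha : -1 < a) (ha' : a < 1) {g : ℝ → ℝ≥0∞}
    {M K : ℝ≥0∞} (hM : M ≠ ⊤) (hK : K ≠ ⊤) (hgM : ∀ s, g s ≤ M)
    (hgK : ∀ s, g s ≤ K * powWeight 2 s) :
    ∫⁻ s, powWeight a s * g s < ⊤ := by
  rw [← lintegral_add_compl _ (measurableSet_closedBall (x := (0 : ℝ)) (ε := 1))]
  refine ENNReal.add_lt_top.2 ⟨?_, ?_⟩
  · calc ∫⁻ s in closedBall 0 1, powWeight a s * g s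
        ≤ ∫⁻ s in closedBall 0 1, powWeight a s * M :=
          setLIntegral_mono' measurableSet_closedBall fun s _ => by gcongr; exact hgM s
      _ = (∫⁻ s in closedBall 0 1, powWeight a s) * M :=
          lintegral_mul_const _ (measurable_powWeight a)
      _ < ⊤ := ENNReal.mul_lt_top (setLIntegral_powWeight_closedBall_lt_top ha' 1) hM.lt_top
  · calc ∫⁻ s in (closedBall 0 1)ᶜ, powWeight a s * g s
        ≤ ∫⁻ s in (closedBall 0 1)ᶜ, K * powWeight (a + 2) s :=
          setLIntegral_mono' measurableSet_closedBall.compl fun s hs => by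
            have hs0 : s ≠ 0 := by rintro rfl; simp at hs
            rw [powWeight_add hs0, mul_left_comm]
            gcongr
            exact hgK s
      _ = K * ∫⁻ s in (closedBall 0 1)ᶜ, powWeight (a + 2) s :=
          lintegral_const_mul _ (measurable_powWeight _)
      _ < ⊤ := ENNReal.mul_lt_top hK.lt_top
          (setLIntegral_powWeight_compl_closedBall_lt_top (by linarith) one_pos)

end powWeight

/-- `|𝟙̂_{[0,t]}(s)|²`, where `𝟙̂_{[0,t]}(s) = (e^{ist} - 1)/(is)`; at `s = 0` the division
gives `0` instead of `t²`. -/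
noncomputable def fourierIndicatorSq (t s : ℝ) : ℝ≥0∞ :=
  ENNReal.ofReal (‖Complex.exp (Complex.I * s * t) - 1‖ ^ 2 / |s| ^ 2)

@[fun_prop]
lemma measurable_fourierIndicatorSq (t : ℝ) : Measurable (fourierIndicatorSq t) := by
  unfold fourierIndicatorSq
  fun_prop

lemma fourierIndicatorSq_le_sq (t s : ℝ) : fourierIndicatorSq t s ≤ ENNReal.ofReal (t ^ 2) := by
  refine ENNReal.ofReal_le_ofReal (div_le_of_le_mul₀ (by positivity) (by positivity) ?_)
  have h : ‖Complex.exp (Complex.I * s * t) - 1‖ ≤ |t| * |s| := by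
    rw [mul_assoc, ← Complex.ofReal_mul, mul_comm |t|, ← abs_mul, ← Real.norm_eq_abs]
    exact Real.norm_exp_I_mul_ofReal_sub_one_le
  calc ‖Complex.exp (Complex.I * s * t) - 1‖ ^ 2 ≤ (|t| * |s|) ^ 2 := by gcongr
    _ = t ^ 2 * |s| ^ 2 := by rw [mul_pow, sq_abs]

lemma fourierIndicatorSq_le_four_mul_powWeight_two (t s : ℝ) :
    fourierIndicatorSq t s ≤ ENNReal.ofReal 4 * powWeight 2 s := by
  rw [fourierIndicatorSq, powWeight, ← ENNReal.ofReal_mul (by norm_num)]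
  refine ENNReal.ofReal_le_ofReal ?_
  have h : ‖Complex.exp (Complex.I * s * t) - 1‖ ≤ 2 := by
    refine (norm_sub_le _ _).trans ?_
    rw [mul_assoc, ← Complex.ofReal_mul, Complex.norm_exp_I_mul_ofReal, norm_one]
    norm_num
  rw [Real.rpow_neg (abs_nonneg s), Real.rpow_two, div_eq_mul_inv]
  gcongr
  nlinarith [norm_nonneg (Complex.exp (Complex.I * s * t) - 1)]

theorem stmt17_general (k : ℕ) (d : ℝ)
    (hd : (1 / 2 : ℝ) * (1 - 1 / (k : ℝ)) < d) (hd' : d < 1 / 2) (t : ℝ) :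
    ∫⁻ u : Fin k → ℝ,
      ENNReal.ofReal
        (‖Complex.exp (Complex.I * (∑ i, u i : ℝ) * t) - 1‖ ^ 2 / |∑ i, u i| ^ 2 *
          ∏ i, |u i| ^ (-(2 * d))) < ⊤ := by
  obtain ⟨n, rfl⟩ : ∃ n, k = n + 1 :=
    Nat.exists_eq_succ_of_ne_zero (by rintro rfl; norm_num at hd; linarith)
  have hn : ((n : ℝ) + 1) * (1 - 2 * d) < 1 := by
    push_cast at hd
    rw [one_sub_div (by positivity)] at hd
    field_simp at hd
    nlinarith
  obtain ⟨C, hC, hCeq⟩ := exists_lintegral_prod_powWeight_mul_comp_sum_eq (by linarith) hn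
  have hintegrand : ∀ u : Fin (n + 1) → ℝ,
      ENNReal.ofReal (‖Complex.exp (Complex.I * (∑ i, u i : ℝ) * t) - 1‖ ^ 2 / |∑ i, u i| ^ 2 *
          ∏ i, |u i| ^ (-(2 * d)))
        = (∏ i, powWeight (2 * d) (u i)) * fourierIndicatorSq t (∑ i, u i) := fun u => by
    rw [ENNReal.ofReal_mul (by positivity), mul_comm,
      ENNReal.ofReal_prod_of_nonneg fun i _ => by positivity]
    rfl
  simp_rw [hintegrand, hCeq _ (measurable_fourierIndicatorSq t)]
  exact ENNReal.mul_lt_top hC.lt_top <| lintegral_powWeight_mul_lt_top (by nlinarith)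
    (by nlinarith) ENNReal.ofReal_ne_top ENNReal.ofReal_ne_top
    (fourierIndicatorSq_le_sq t) (fourierIndicatorSq_le_four_mul_powWeight_two t)

theorem stmt17 (k : ℕ) (hk : 2 ≤ k) (d : ℝ)
    (hd : (1 / 2 : ℝ) * (1 - 1 / (k : ℝ)) < d) (hd' : d < 1 / 2) (t : ℝ) (ht : 0 < t) :
    ∫⁻ u : Fin k → ℝ,
      ENNReal.ofReal
        (‖Complex.exp (Complex.I * (∑ i, u i : ℝ) * t) - 1‖ ^ 2 / |∑ i, u i| ^ 2 *
          ∏ i, |u i| ^ (-(2 * d))) < ⊤ :=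
  stmt17_general k d hd hd' t
end
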